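/- arXiv:1903.01658 — 8 statements merged into one kernel-verified Lean document; each statement's English description precedes it below -/
import Mathlib

section
/- Let α1, α2 ∈ [0,1] with β i = √(αi(1−αi)) for i = 1, 2, and define the 4×4 real-entried states ρ1 = [[1,0],[0,0]] ⊗ [[1,0],[0,0]] and ρ2 = [[1−α1, β1],[β1, α1]] ⊗ [[1−α2, β2],[β2, α2]] on ℂ² ⊗ ℂ². If α1 + α2 ≥ 1, then ρ1 and ρ2 are perfectly distinguishable in SEP. -/
open Matrix Kronecker ComplexOrder

noncomputable section

abbrev Mat (dA dB : ℕ) := Matrix (Fin dA × Fin dB) (Fin dA × Fin dB) ℂ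

/-- Membership in the dual cone SEP*. -/
def InSEPDual {dA dB : ℕ} (M : Mat dA dB) : Prop :=
  M.IsHermitian ∧ ∀ (A : Matrix (Fin dA) (Fin dA) ℂ) (B : Matrix (Fin dB) (Fin dB) ℂ),
    A.PosSemidef → B.PosSemidef → 0 ≤ ((A ⊗ₖ B) * M).trace

/-- Perfect distinguishability of two states in SEP. -/
def PerfDistSEP {dA dB : ℕ} (ρ1 ρ2 : Mat dA dB) : Prop :=
  ∃ M1 M2 : Mat dA dB, InSEPDual M1 ∧ InSEPDual M2 ∧ M1 + M2 = 1 ∧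
    (M1 * ρ1).trace = 1 ∧ (M2 * ρ2).trace = 1 ∧ (M2 * ρ1).trace = 0 ∧ (M1 * ρ2).trace = 0

/-!
Write `cᵢ = √(1 - αᵢ)`, `sᵢ = √αᵢ`, so that the second state is `|a⟩⟨a| ⊗ |b⟩⟨b|` with
`a = (c₁, s₁)`, `b = (c₂, s₂)`. Rank-one projectors `|V⟩⟨V|` onto vectors of `ℂ² ⊗ ℂ²` and their
partial transposes `(|V⟩⟨V|)^Γ` lie in SEP*, and against a real product state `|a⟩⟨a| ⊗ |b⟩⟨b|`
both have expectation `(aᵀ V b)²`, where `V` is the coefficient matrix of the vector. Take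
`M₂ = |W⟩⟨W| + |Z⟩⟨Z|` with `W₀₀ = Z₀₀ = 0` and `M₁ = |Y⟩⟨Y| + (|U⟩⟨U|)^Γ` with
`aᵀ Y b = aᵀ U b = 0`. For `Y`, `W` off-diagonal and `U`, `Z` diagonal, `M₁ + M₂ = 1` amounts to
four scalar identities, and these can be solved as soon as `c₁² + c₂² ≤ 1`, i.e. `α₁ + α₂ ≥ 1`.
-/

namespace Matrix

open scoped MatrixOrder in
theorem PosSemidef.trace_mul_nonneg {n 𝕜 : Type*} [Fintype n] [RCLike 𝕜] {A B : Matrix n n 𝕜}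
    (hA : A.PosSemidef) (hB : B.PosSemidef) : 0 ≤ (A * B).trace := by
  classical
  obtain ⟨C, rfl⟩ := CStarAlgebra.nonneg_iff_eq_star_mul_self.mp hB.nonneg
  rw [star_eq_conjTranspose, ← mul_assoc, trace_mul_comm, ← mul_assoc]
  exact (hA.mul_mul_conjTranspose_same C).trace_nonneg

variable {α β R : Type*}

def partialTranspose (M : Matrix (α × β) (α × β) R) : Matrix (α × β) (α × β) R :=
  of fun x y => M (x.1, y.2) (y.1, x.2)

theorem IsHermitian.partialTranspose [Star R] {M : Matrix (α × β) (α × β) R}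
    (hM : M.IsHermitian) : M.partialTranspose.IsHermitian := by
  ext x y
  exact hM.apply (x.1, y.2) (y.1, x.2)

theorem trace_kronecker_mul_partialTranspose [Fintype α] [Fintype β]
    [NonUnitalNonAssocSemiring R] (A : Matrix α α R) (B : Matrix β β R)
    (M : Matrix (α × β) (α × β) R) :
    ((A ⊗ₖ B) * M.partialTranspose).trace = ((A ⊗ₖ Bᵀ) * M).trace := by
  simp only [trace, diag, mul_apply, kronecker_apply, partialTranspose, of_apply, transpose_apply,
    Fintype.sum_prod_type]
  refine Finset.sum_congr rfl fun a _ => ?_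
  rw [Finset.sum_comm]
  refine (Finset.sum_congr rfl fun a' _ => Finset.sum_comm).trans ?_
  rw [Finset.sum_comm]

end Matrix

section SEPDual

variable {dA dB : ℕ}

theorem InSEPDual.add {M N : Mat dA dB} (hM : InSEPDual M) (hN : InSEPDual N) :
    InSEPDual (M + N) :=
  ⟨hM.1.add hN.1, fun A B hA hB => by
    rw [Matrix.mul_add, trace_add]
    exact add_nonneg (hM.2 A B hA hB) (hN.2 A B hA hB)⟩

theorem Matrix.PosSemidef.inSEPDual {M : Mat dA dB} (hM : M.PosSemidef) : InSEPDual M :=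
  ⟨hM.1, fun _ _ hA hB => (hA.kronecker hB).trace_mul_nonneg hM⟩

theorem Matrix.PosSemidef.inSEPDual_partialTranspose {M : Mat dA dB} (hM : M.PosSemidef) :
    InSEPDual M.partialTranspose :=
  ⟨hM.1.partialTranspose, fun A B hA hB => by
    rw [trace_kronecker_mul_partialTranspose]
    exact (hA.kronecker hB.transpose).trace_mul_nonneg hM⟩

theorem perfDistSEP_of_add_eq_one {ρ₁ ρ₂ M₁ M₂ : Mat dA dB} (hM₁ : InSEPDual M₁)
    (hM₂ : InSEPDual M₂) (hM : M₁ + M₂ = 1) (hρ₁ : ρ₁.trace = 1) (hρ₂ : ρ₂.trace = 1)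
    (h₁ : (M₂ * ρ₁).trace = 0) (h₂ : (M₁ * ρ₂).trace = 0) : PerfDistSEP ρ₁ ρ₂ := by
  have hsum (ρ : Mat dA dB) : (M₁ * ρ).trace + (M₂ * ρ).trace = ρ.trace := by
    rw [← trace_add, ← Matrix.add_mul, hM, Matrix.one_mul]
  refine ⟨M₁, M₂, hM₁, hM₂, hM, ?_, ?_, h₁, h₂⟩
  · simpa [h₁, hρ₁] using hsum ρ₁
  · simpa [h₂, hρ₂] using hsum ρ₂

end SEPDual

section KetBra

variable {ι κ : Type*}

def ketBra (v : ι → ℝ) : Matrix ι ι ℂ :=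
  vecMulVec (fun i => (v i : ℂ)) (fun i => (v i : ℂ))

theorem posSemidef_ketBra [Fintype ι] (v : ι → ℝ) : (ketBra v).PosSemidef := by
  have hstar : star (fun i => (v i : ℂ)) = fun i => (v i : ℂ) := by ext; simp
  simpa [ketBra, hstar] using posSemidef_vecMulVec_self_star (fun i => (v i : ℂ))

theorem transpose_ketBra (v : ι → ℝ) : (ketBra v)ᵀ = ketBra v := by
  simp [ketBra, transpose_vecMulVec]

theorem kronecker_ketBra (a : ι → ℝ) (b : κ → ℝ) :
    ketBra a ⊗ₖ ketBra b = ketBra (fun x => a x.1 * b x.2) := by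
  ext x y
  simp only [ketBra, kroneckerMap_apply, vecMulVec_apply]
  push_cast
  ring

theorem trace_ketBra [Fintype ι] (v : ι → ℝ) : (ketBra v).trace = ((v ⬝ᵥ v : ℝ) : ℂ) := by
  simp [ketBra, dotProduct]

theorem trace_ketBra_mul_ketBra [Fintype ι] (v w : ι → ℝ) :
    (ketBra v * ketBra w).trace = (((v ⬝ᵥ w) ^ 2 : ℝ) : ℂ) := by
  simp [ketBra, vecMulVec_mul_vecMulVec, dotProduct, sq, Finset.sum_mul]

theorem trace_partialTranspose_ketBra_mul_kronecker [Fintype ι] [Fintype κ] (u : ι × κ → ℝ)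
    (a : ι → ℝ) (b : κ → ℝ) :
    ((ketBra u).partialTranspose * (ketBra a ⊗ₖ ketBra b)).trace =
      (((u ⬝ᵥ fun x => a x.1 * b x.2) ^ 2 : ℝ) : ℂ) := by
  rw [trace_mul_comm, trace_kronecker_mul_partialTranspose, transpose_ketBra, kronecker_ketBra,
    trace_mul_comm, trace_ketBra_mul_ketBra]

end KetBra

theorem ketBra_add_partialTranspose_add_eq_one {p q m n r k : ℝ} (hpm : p ^ 2 + m ^ 2 = 1)
    (hqn : q ^ 2 + n ^ 2 = 1) (hrk : r ^ 2 + k ^ 2 = 1) (hsum : p * q + m * n + k = 0) :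
    ketBra (Function.uncurry ![![0, m], ![n, 0]])
        + (ketBra (Function.uncurry ![![1, 0], ![0, k]])).partialTranspose
      + (ketBra (Function.uncurry ![![0, p], ![q, 0]])
        + ketBra (Function.uncurry ![![0, 0], ![0, r]])) = (1 : Mat 2 2) := by
  ext ⟨i, j⟩ ⟨i', j'⟩
  fin_cases i <;> fin_cases j <;> fin_cases i' <;> fin_cases j' <;>
    simp [ketBra, partialTranspose, one_apply, vecMulVec_apply, Function.uncurry_apply_pair] <;>
    norm_cast <;> linarith

theorem perfDistSEP_of_certificate {c₁ s₁ c₂ s₂ p q m n r k : ℝ}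
    (h₁ : c₁ ^ 2 + s₁ ^ 2 = 1) (h₂ : c₂ ^ 2 + s₂ ^ 2 = 1) (hpm : p ^ 2 + m ^ 2 = 1)
    (hqn : q ^ 2 + n ^ 2 = 1) (hrk : r ^ 2 + k ^ 2 = 1) (hsum : p * q + m * n + k = 0)
    (hm : c₁ * s₂ * m + s₁ * c₂ * n = 0) (hk : c₁ * c₂ + s₁ * s₂ * k = 0) :
    PerfDistSEP (ketBra ![1, 0] ⊗ₖ ketBra ![1, 0]) (ketBra ![c₁, s₁] ⊗ₖ ketBra ![c₂, s₂]) := by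
  refine perfDistSEP_of_add_eq_one
    ((posSemidef_ketBra _).inSEPDual.add (posSemidef_ketBra _).inSEPDual_partialTranspose)
    ((posSemidef_ketBra _).inSEPDual.add (posSemidef_ketBra _).inSEPDual)
    (ketBra_add_partialTranspose_add_eq_one hpm hqn hrk hsum) ?_ ?_ ?_ ?_
  · simp [trace_kronecker, trace_ketBra]
  · simp [trace_kronecker, trace_ketBra, ← sq, h₁, h₂]
  · rw [Matrix.add_mul, trace_add, kronecker_ketBra, trace_ketBra_mul_ketBra,
      trace_ketBra_mul_ketBra]
    simp [dotProduct, Fintype.sum_prod_type]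
  · rw [Matrix.add_mul, trace_add, trace_partialTranspose_ketBra_mul_kronecker, kronecker_ketBra,
      trace_ketBra_mul_ketBra]
    simp [dotProduct, Fintype.sum_prod_type]
    norm_cast
    linear_combination (c₁ * s₂ * m + s₁ * c₂ * n) * hm + (c₁ * c₂ + s₁ * s₂ * k) * hk

theorem perfDistSEP_ketBra_of_sq_add_sq_le_one {c₁ s₁ c₂ s₂ : ℝ} (h₁ : c₁ ^ 2 + s₁ ^ 2 = 1)
    (h₂ : c₂ ^ 2 + s₂ ^ 2 = 1) (h : c₁ ^ 2 + c₂ ^ 2 ≤ 1) :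
    PerfDistSEP (ketBra ![1, 0] ⊗ₖ ketBra ![1, 0]) (ketBra ![c₁, s₁] ⊗ₖ ketBra ![c₂, s₂]) := by
  rcases eq_or_ne c₁ 0 with rfl | hc₁
  · exact perfDistSEP_of_certificate (p := 0) (m := 1) (q := 1) (n := 0) (r := 1) (k := 0) h₁ h₂
      (by norm_num) (by norm_num) (by norm_num) (by norm_num) (by ring) (by ring)
  rcases eq_or_ne c₂ 0 with rfl | hc₂
  · exact perfDistSEP_of_certificate (p := 1) (m := 0) (q := 0) (n := 1) (r := 1) (k := 0) h₁ h₂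
      (by norm_num) (by norm_num) (by norm_num) (by norm_num) (by ring) (by ring)
  have hs₁ : s₁ ≠ 0 := by
    rintro rfl
    nlinarith [sq_pos_of_ne_zero hc₂]
  have hs₂ : s₂ ≠ 0 := by
    rintro rfl
    nlinarith [sq_pos_of_ne_zero hc₁]
  obtain ⟨ε, hε₀, hε⟩ : ∃ ε : ℝ, ε ≠ 0 ∧ ε ^ 2 = c₁ ^ 2 + c₂ ^ 2 :=
    ⟨√(c₁ ^ 2 + c₂ ^ 2), by positivity, Real.sq_sqrt (by positivity)⟩
  -- `hk` forces `k = -c₁c₂/(s₁s₂)`, and `r² = 1 - k²` is then `τ²/(s₁s₂)²`: this is where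
  -- `c₁² + c₂² ≤ 1` enters.
  obtain ⟨τ, hτ⟩ : ∃ τ : ℝ, τ ^ 2 = 1 - c₁ ^ 2 - c₂ ^ 2 :=
    ⟨√(1 - c₁ ^ 2 - c₂ ^ 2), Real.sq_sqrt (by linarith)⟩
  apply perfDistSEP_of_certificate (p := c₁ / (s₂ * ε)) (m := c₂ * τ / (s₂ * ε))
    (q := c₂ / (s₁ * ε)) (n := -(c₁ * τ / (s₁ * ε))) (r := τ / (s₁ * s₂))
    (k := -(c₁ * c₂ / (s₁ * s₂))) h₁ h₂
  · field_simp
    linear_combination c₂ ^ 2 * hτ - s₂ ^ 2 * hε - (c₁ ^ 2 + c₂ ^ 2) * h₂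
  · field_simp
    linear_combination c₁ ^ 2 * hτ - s₁ ^ 2 * hε - (c₁ ^ 2 + c₂ ^ 2) * h₁
  · field_simp
    linear_combination hτ - s₂ ^ 2 * h₁ - (1 - c₁ ^ 2) * h₂
  · field_simp
    linear_combination -c₁ * c₂ * (hτ + hε)
  · field_simp
    ring
  · field_simp
    ring

theorem ketBra_sqrt_one_sub_sqrt {α : ℝ} (h₀ : 0 ≤ α) (h₁ : α ≤ 1) :
    ketBra ![√(1 - α), √α] =
      !![((1 - α : ℝ) : ℂ), (√(α * (1 - α)) : ℝ); (√(α * (1 - α)) : ℝ), (α : ℝ)] := by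
  ext i j
  fin_cases i <;> fin_cases j <;>
    simp [ketBra, vecMulVec_apply, Real.sqrt_mul h₀, mul_comm, ← Complex.ofReal_mul,
      Real.mul_self_sqrt, h₀, sub_nonneg.2 h₁]

/-- Sufficiency: if `α1 + α2 ≥ 1` then the two separable pure states are perfectly
distinguishable in SEP. -/
theorem sufficiency (α1 α2 β1 β2 : ℝ)
    (hα1 : α1 ∈ Set.Icc (0:ℝ) 1) (hα2 : α2 ∈ Set.Icc (0:ℝ) 1)
    (hβ1 : β1 = Real.sqrt (α1 * (1 - α1))) (hβ2 : β2 = Real.sqrt (α2 * (1 - α2)))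
    (h : 1 ≤ α1 + α2) :
    PerfDistSEP
      ((!![(1:ℂ), 0; 0, 0]) ⊗ₖ (!![(1:ℂ), 0; 0, 0]))
      ((!![((1 - α1 : ℝ) : ℂ), (β1 : ℝ); (β1 : ℝ), (α1 : ℝ)]) ⊗ₖ
        (!![((1 - α2 : ℝ) : ℂ), (β2 : ℝ); (β2 : ℝ), (α2 : ℝ)])) := by
  obtain ⟨hα1₀, hα1₁⟩ := hα1
  obtain ⟨hα2₀, hα2₁⟩ := hα2
  have hpure : ketBra ![1, 0] = !![(1:ℂ), 0; 0, 0] := by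
    simpa using ketBra_sqrt_one_sub_sqrt le_rfl zero_le_one
  have hunit {α : ℝ} (h₀ : 0 ≤ α) (h₁ : α ≤ 1) : √(1 - α) ^ 2 + √α ^ 2 = 1 := by
    rw [Real.sq_sqrt (by linarith), Real.sq_sqrt h₀]
    ring
  rw [← hpure, hβ1, hβ2, ← ketBra_sqrt_one_sub_sqrt hα1₀ hα1₁,
    ← ketBra_sqrt_one_sub_sqrt hα2₀ hα2₁]
  refine perfDistSEP_ketBra_of_sq_add_sq_le_one (hunit hα1₀ hα1₁) (hunit hα2₀ hα2₁) ?_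
  rw [Real.sq_sqrt (by linarith), Real.sq_sqrt (by linarith)]
  linarith
end
end

section
/- Let α1, α2 ∈ [0,1] and β1, β2 ≥ 0 with βi² ≤ αi(1−αi) for i = 1, 2, and define ρ1 = [[1,0],[0,0]] ⊗ [[1,0],[0,0]] and ρ2 = [[1−α1, β1],[β1, α1]] ⊗ [[1−α2, β2],[β2, α2]] on ℂ² ⊗ ℂ². If ρ1 and ρ2 are perfectly distinguishable in SEP, then α1 + α2 ≥ 1. -/
/-!
Write `ρ₂ = σ₁ ⊗ σ₂` and let `M` be the effect accepting `ρ₁ = |00⟩⟨00|`. Pairing `M` with `σ₂`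
on the second factor gives a qubit effect `K = Tr_B ((1 ⊗ σ₂) M)` with `0 ≤ K ≤ 1`
(by membership of `M` and `1 - M` in SEP*) and `Tr (σ₁ K) = 0`; an effect annihilating `σ₁`
has `⟨0|K|0⟩ ≤ α₁` unless `α₁ = 1`. On the other hand, the block `B = ⟨0|_A M |0⟩_A` also
satisfies `0 ≤ B ≤ 1` and `⟨0|B|0⟩ = 1`, which forces `B = diag (1, c)` with `c ≥ 0`, hence
`⟨0|K|0⟩ = Tr (σ₂ B) ≥ 1 - α₂`.
-/

open Matrix Kronecker ComplexOrder

noncomputable section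

namespace Matrix

variable {m n : Type*}

/-- `ptraceRight M B = Tr_B ((1 ⊗ B) M)`. -/
def ptraceRight [Fintype n] (M : Matrix (m × n) (m × n) ℂ) (B : Matrix n n ℂ) : Matrix m m ℂ :=
  of fun a a' => ∑ b, ∑ b', B b' b * M (a, b) (a', b')

/-- `ptraceLeft M A = Tr_A ((A ⊗ 1) M)`. -/
def ptraceLeft [Fintype m] (M : Matrix (m × n) (m × n) ℂ) (A : Matrix m m ℂ) : Matrix n n ℂ :=
  of fun b b' => ∑ a, ∑ a', A a' a * M (a, b) (a', b')

theorem trace_kronecker_mul_eq_trace_mul_ptraceRight [Fintype m] [Fintype n] (A : Matrix m m ℂ)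
    (B : Matrix n n ℂ) (M : Matrix (m × n) (m × n) ℂ) :
    ((A ⊗ₖ B) * M).trace = (A * M.ptraceRight B).trace := by
  simp only [trace, diag, mul_apply, ptraceRight, of_apply, kroneckerMap_apply,
    Fintype.sum_prod_type, Finset.mul_sum]
  refine Finset.sum_congr rfl fun _ _ => ?_
  rw [Finset.sum_comm]
  refine Finset.sum_congr rfl fun _ _ => ?_
  rw [Finset.sum_comm]
  exact Finset.sum_congr rfl fun _ _ => Finset.sum_congr rfl fun _ _ => by ring

theorem trace_kronecker_mul_eq_trace_mul_ptraceLeft [Fintype m] [Fintype n] (A : Matrix m m ℂ)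
    (B : Matrix n n ℂ) (M : Matrix (m × n) (m × n) ℂ) :
    ((A ⊗ₖ B) * M).trace = (B * M.ptraceLeft A).trace := by
  simp only [trace, diag, mul_apply, ptraceLeft, of_apply, kroneckerMap_apply,
    Fintype.sum_prod_type, Finset.mul_sum, Finset.sum_comm (γ := m) (α := n)]
  refine Finset.sum_congr rfl fun _ _ => Finset.sum_congr rfl fun _ _ => ?_
  rw [Finset.sum_comm]
  exact Finset.sum_congr rfl fun _ _ => Finset.sum_congr rfl fun _ _ => by ring

theorem ptraceRight_one_sub [Fintype n] [DecidableEq m] [DecidableEq n]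
    (M : Matrix (m × n) (m × n) ℂ) (B : Matrix n n ℂ) :
    (1 - M).ptraceRight B = B.trace • 1 - M.ptraceRight B := by
  ext a a'
  simp [ptraceRight, one_apply, mul_sub, Finset.sum_sub_distrib, trace, ite_and]

theorem ptraceLeft_one_sub [Fintype m] [DecidableEq m] [DecidableEq n]
    (M : Matrix (m × n) (m × n) ℂ) (A : Matrix m m ℂ) :
    (1 - M).ptraceLeft A = A.trace • 1 - M.ptraceLeft A := by
  ext b b'
  simp [ptraceLeft, one_apply, mul_sub, Finset.sum_sub_distrib, trace, ite_and]

theorem IsHermitian.ptraceRight [Fintype n] {M : Matrix (m × n) (m × n) ℂ} {B : Matrix n n ℂ}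
    (hM : M.IsHermitian) (hB : B.IsHermitian) : (M.ptraceRight B).IsHermitian := by
  ext a a'
  simp only [conjTranspose_apply, Matrix.ptraceRight, of_apply, star_sum, star_mul', hM.apply,
    hB.apply]
  rw [Finset.sum_comm]

theorem IsHermitian.ptraceLeft [Fintype m] {M : Matrix (m × n) (m × n) ℂ} {A : Matrix m m ℂ}
    (hM : M.IsHermitian) (hA : A.IsHermitian) : (M.ptraceLeft A).IsHermitian := by
  ext b b'
  simp only [conjTranspose_apply, Matrix.ptraceLeft, of_apply, star_sum, star_mul', hM.apply,
    hA.apply]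
  rw [Finset.sum_comm]

theorem trace_vecMulVec_star_mul {R : Type*} [Fintype n] [CommRing R] [StarRing R] (x : n → R)
    (K : Matrix n n R) : (vecMulVec x (star x) * K).trace = star x ⬝ᵥ (K *ᵥ x) := by
  rw [trace_mul_comm, mul_vecMulVec, trace_vecMulVec, dotProduct_comm]

theorem posSemidef_of_forall_trace_mul_nonneg {R : Type*} [Fintype n] [CommRing R] [PartialOrder R]
    [StarRing R] [StarOrderedRing R] {K : Matrix n n R} (hK : K.IsHermitian)
    (h : ∀ A : Matrix n n R, A.PosSemidef → 0 ≤ (A * K).trace) : K.PosSemidef :=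
  .of_dotProduct_mulVec_nonneg hK fun x =>
    trace_vecMulVec_star_mul x K ▸ h _ (posSemidef_vecMulVec_self_star x)

theorem PosSemidef.normSq_apply_one_zero_le {K : Matrix (Fin 2) (Fin 2) ℂ} (hK : K.PosSemidef) :
    Complex.normSq (K 1 0) ≤ (K 0 0).re * (K 1 1).re := by
  have hdet := hK.det_nonneg
  rw [det_fin_two, ← hK.1.apply 0 1, ← hK.1.coe_re_apply_self 0, ← hK.1.coe_re_apply_self 1,
    Complex.star_def, ← Complex.normSq_eq_conj_mul_self] at hdet
  simpa [Complex.le_def] using hdet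

theorem re_apply_zero_zero_le_re_trace_mul {σ B : Matrix (Fin 2) (Fin 2) ℂ} (hσ : σ.PosSemidef)
    (hB : B.PosSemidef) (hB' : (1 - B).PosSemidef) (h : B 0 0 = 1) :
    (σ 0 0).re ≤ (σ * B).trace.re := by
  have h10 : B 1 0 = 0 := Complex.normSq_eq_zero.mp <|
    le_antisymm (by simpa [h] using hB'.normSq_apply_one_zero_le) (Complex.normSq_nonneg _)
  have h01 : B 0 1 = 0 := by rw [← hB.1.apply 0 1, h10, star_zero]
  have hσ11 := Complex.nonneg_iff.mp (hσ.diag_nonneg (i := 1))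
  have hB11 := Complex.nonneg_iff.mp (hB.diag_nonneg (i := 1))
  simpa [trace_fin_two, mul_apply, Fin.sum_univ_two, h, h01, h10, ← hσ11.2, ← hB11.2]
    using mul_nonneg hσ11.1 hB11.1

end Matrix

namespace InSEPDual

variable {dA dB : ℕ} {M : Mat dA dB}

theorem posSemidef_ptraceRight (hM : InSEPDual M) {B : Matrix (Fin dB) (Fin dB) ℂ}
    (hB : B.PosSemidef) : (M.ptraceRight B).PosSemidef :=
  posSemidef_of_forall_trace_mul_nonneg (hM.1.ptraceRight hB.1) fun A hA =>
    trace_kronecker_mul_eq_trace_mul_ptraceRight A B M ▸ hM.2 A B hA hB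

theorem posSemidef_ptraceLeft (hM : InSEPDual M) {A : Matrix (Fin dA) (Fin dA) ℂ}
    (hA : A.PosSemidef) : (M.ptraceLeft A).PosSemidef :=
  posSemidef_of_forall_trace_mul_nonneg (hM.1.ptraceLeft hA.1) fun B hB =>
    trace_kronecker_mul_eq_trace_mul_ptraceLeft A B M ▸ hM.2 A B hA hB

theorem posSemidef_one_sub_ptraceRight (hM : InSEPDual (1 - M)) {B : Matrix (Fin dB) (Fin dB) ℂ}
    (hB : B.PosSemidef) (htr : B.trace = 1) : (1 - M.ptraceRight B).PosSemidef := by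
  simpa [ptraceRight_one_sub, htr] using hM.posSemidef_ptraceRight hB

theorem posSemidef_one_sub_ptraceLeft (hM : InSEPDual (1 - M)) {A : Matrix (Fin dA) (Fin dA) ℂ}
    (hA : A.PosSemidef) (htr : A.trace = 1) : (1 - M.ptraceLeft A).PosSemidef := by
  simpa [ptraceLeft_one_sub, htr] using hM.posSemidef_ptraceLeft hA

end InSEPDual

def qubitState (α β : ℝ) : Matrix (Fin 2) (Fin 2) ℂ :=
  !![((1 - α : ℝ) : ℂ), (β : ℝ); (β : ℝ), (α : ℝ)]

section qubitState

variable {α β : ℝ}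

theorem trace_qubitState : (qubitState α β).trace = 1 := by
  simp [qubitState, trace_fin_two]

theorem posSemidef_qubitState (hβ : β ^ 2 ≤ α * (1 - α)) : (qubitState α β).PosSemidef := by
  have hα : 0 ≤ α ∧ α ≤ 1 := by constructor <;> nlinarith [sq_nonneg β]
  have hherm : (qubitState α β).IsHermitian := by
    ext i j
    fin_cases i <;> fin_cases j <;> simp [qubitState]
  refine .of_dotProduct_mulVec_nonneg hherm fun x =>
    Complex.nonneg_iff.mpr ⟨?_, (hherm.im_star_dotProduct_mulVec_self x).symm⟩
  simp only [dotProduct, Pi.star_apply, RCLike.star_def, mulVec, qubitState, Complex.ofReal_sub,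
    Complex.ofReal_one, of_apply, cons_val', cons_val_fin_one, Fin.sum_univ_two, Fin.isValue,
    cons_val_zero, cons_val_one, Complex.add_re, Complex.mul_re, Complex.conj_re, Complex.sub_re,
    Complex.one_re, Complex.ofReal_re, Complex.sub_im, Complex.one_im, Complex.ofReal_im, sub_self,
    zero_mul, sub_zero, Complex.conj_im, Complex.add_im, Complex.mul_im, add_zero, neg_mul,
    sub_neg_eq_add]
  nlinarith [sq_nonneg ((1 - α) * (x 0).re + β * (x 1).re),
    sq_nonneg ((1 - α) * (x 0).im + β * (x 1).im), sq_nonneg (α * (x 1).re + β * (x 0).re),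
    sq_nonneg (α * (x 1).im + β * (x 0).im), sq_nonneg (x 0).re, sq_nonneg (x 0).im,
    sq_nonneg (x 1).re, sq_nonneg (x 1).im]

theorem one_sub_mul_re_apply_zero_zero_le {K : Matrix (Fin 2) (Fin 2) ℂ} (hK : K.PosSemidef)
    (hK' : (1 - K).PosSemidef) (hβ : β ^ 2 ≤ α * (1 - α)) (h : (qubitState α β * K).trace = 0) :
    (1 - α) * (K 0 0).re ≤ (1 - α) * α := by
  set x := (K 0 0).re
  set y := (K 1 1).re
  set r := (K 1 0).re
  have hxy : r * r ≤ x * y := (Complex.re_sq_le_normSq _).trans hK.normSq_apply_one_zero_le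
  have hxy' : r * r ≤ (1 - x) * (1 - y) := by
    simpa using (Complex.re_sq_le_normSq _).trans hK'.normSq_apply_one_zero_le
  have htr : (1 - α) * x + α * y = -(2 * β * r) := by
    have := congrArg Complex.re h
    simp only [qubitState, Complex.ofReal_sub, Complex.ofReal_one, cons_mul, Nat.succ_eq_add_one,
      Nat.reduceAdd, empty_mul, Equiv.symm_apply_apply, trace_fin_two, Fin.isValue, of_apply,
      cons_val', vecMul, dotProduct, Fin.sum_univ_two, cons_val_zero, cons_val_one,
      cons_val_fin_one, ← hK.1.apply 0 1, RCLike.star_def, Complex.add_re, Complex.mul_re,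
      Complex.sub_re, Complex.one_re, Complex.ofReal_re, Complex.sub_im, Complex.one_im,
      Complex.ofReal_im, sub_self, zero_mul, sub_zero, Complex.conj_re, Complex.conj_im, mul_neg,
      neg_zero, Complex.zero_re] at this
    linarith
  have hαα : 0 ≤ α * (1 - α) := (sq_nonneg β).trans hβ
  have hsq : ((1 - α) * x + α * y) ^ 2 ≤ 4 * (α * (1 - α)) * (r * r) := by
    rw [htr]; nlinarith [mul_le_mul_of_nonneg_right hβ (mul_self_nonneg r)]
  -- equality in AM-GM `((1-α)x + αy)² ≥ 4α(1-α)xy`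
  have heq : (1 - α) * x = α * y := by
    nlinarith [sq_nonneg ((1 - α) * x - α * y), mul_le_mul_of_nonneg_left hxy hαα]
  have ht : ((1 - α) * x) ^ 2 ≤ ((1 - α) - (1 - α) * x) * (α - α * y) := by
    have h2 : ((1 - α) * x + α * y) ^ 2 = 4 * ((1 - α) * x) ^ 2 := by rw [← heq]; ring
    nlinarith [mul_le_mul_of_nonneg_left hxy' hαα]
  -- with `t = (1-α)x = αy` this reads `t² ≤ (1-α-t)(α-t)`, i.e. `t ≤ α(1-α)`
  rw [← heq] at ht
  nlinarith [ht]

end qubitState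

theorem necessity_pure_general (α1 α2 β1 β2 : ℝ)
    (hα1 : α1 ∈ Set.Icc (0:ℝ) 1) (hα2 : α2 ∈ Set.Icc (0:ℝ) 1)
    (hβ1' : β1 ^ 2 ≤ α1 * (1 - α1)) (hβ2' : β2 ^ 2 ≤ α2 * (1 - α2))
    (h : PerfDistSEP
      ((!![(1:ℂ), 0; 0, 0]) ⊗ₖ (!![(1:ℂ), 0; 0, 0]))
      ((!![((1 - α1 : ℝ) : ℂ), (β1 : ℝ); (β1 : ℝ), (α1 : ℝ)]) ⊗ₖ
        (!![((1 - α2 : ℝ) : ℂ), (β2 : ℝ); (β2 : ℝ), (α2 : ℝ)]))) :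
    1 ≤ α1 + α2 := by
  obtain ⟨M, M', hM, hM', hsum, hρ1, -, -, hρ2⟩ := h
  obtain rfl : M' = 1 - M := eq_sub_of_add_eq' hsum
  change (M * (qubitState α1 β1 ⊗ₖ qubitState α2 β2)).trace = 0 at hρ2
  set E : Matrix (Fin 2) (Fin 2) ℂ := !![1, 0; 0, 0]
  have hE : E.PosSemidef := by
    simpa [diagonal_fin_two] using
      (posSemidef_diagonal_iff (d := ![(1:ℂ), 0])).mpr (by simp [Fin.forall_fin_two])
  have hσ2 := posSemidef_qubitState hβ2'
  set K := M.ptraceRight (qubitState α2 β2)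
  set B := M.ptraceLeft E
  have hσ1K : (qubitState α1 β1 * K).trace = 0 := by
    rw [← trace_kronecker_mul_eq_trace_mul_ptraceRight, trace_mul_comm, hρ2]
  have hB00 : B 0 0 = 1 := by
    rw [← hρ1, trace_mul_comm, trace_kronecker_mul_eq_trace_mul_ptraceLeft]
    simp [E, B, trace_fin_two, vecMul, dotProduct, Fin.sum_univ_two]
  have hKB : K 0 0 = (qubitState α2 β2 * B).trace := by
    rw [← trace_kronecker_mul_eq_trace_mul_ptraceLeft, trace_kronecker_mul_eq_trace_mul_ptraceRight]
    simp [E, K, trace_fin_two, vecMul, dotProduct, Fin.sum_univ_two]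
  have hupper := one_sub_mul_re_apply_zero_zero_le (hM.posSemidef_ptraceRight hσ2)
    (hM'.posSemidef_one_sub_ptraceRight hσ2 trace_qubitState) hβ1' hσ1K
  have hlower := re_apply_zero_zero_le_re_trace_mul hσ2 (hM.posSemidef_ptraceLeft hE)
    (hM'.posSemidef_one_sub_ptraceLeft hE (by simp [E, trace_fin_two])) hB00
  rw [← hKB] at hlower
  simp only [qubitState, of_apply, cons_val', cons_val_zero, empty_val', cons_val_fin_one,
    Complex.ofReal_re] at hlower
  nlinarith [hα1.2, hα2.1]

/-- Necessity for pure states: perfect distinguishability in SEP implies `α1 + α2 ≥ 1`. -/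
theorem necessity_pure (α1 α2 β1 β2 : ℝ)
    (hα1 : α1 ∈ Set.Icc (0:ℝ) 1) (hα2 : α2 ∈ Set.Icc (0:ℝ) 1)
    (hβ1 : 0 ≤ β1) (hβ2 : 0 ≤ β2)
    (hβ1' : β1 ^ 2 ≤ α1 * (1 - α1)) (hβ2' : β2 ^ 2 ≤ α2 * (1 - α2))
    (h : PerfDistSEP
      ((!![(1:ℂ), 0; 0, 0]) ⊗ₖ (!![(1:ℂ), 0; 0, 0]))
      ((!![((1 - α1 : ℝ) : ℂ), (β1 : ℝ); (β1 : ℝ), (α1 : ℝ)]) ⊗ₖ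
        (!![((1 - α2 : ℝ) : ℂ), (β2 : ℝ); (β2 : ℝ), (α2 : ℝ)]))) :
    1 ≤ α1 + α2 :=
  necessity_pure_general α1 α2 β1 β2 hα1 hα2 hβ1' hβ2' h
end
end

section
/- Let n be a positive integer, let ρ_1, …, ρ_n be separable states on ℂ^{dA} ⊗ ℂ^{dB}, and let M_1, …, M_n ∈ SEP* satisfy Σ_j M_j = 1 (identity) and Tr(M_j ρ_i) = δ_{ij} for all i, j. Then n ≤ dA·dB. -/
open Matrix Kronecker ComplexOrder

noncomputable section

/-- A matrix on the bipartite system is separable if it is a finite sum of Kronecker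
products of positive semidefinite matrices. -/
def SEPSeparable {dA dB : ℕ} (X : Mat dA dB) : Prop :=
  ∃ (m : ℕ) (A : Fin m → Matrix (Fin dA) (Fin dA) ℂ) (B : Fin m → Matrix (Fin dB) (Fin dB) ℂ),
    (∀ i, (A i).PosSemidef) ∧ (∀ i, (B i).PosSemidef) ∧ X = ∑ i, (A i) ⊗ₖ (B i)

/-
If `ρ = ∑ i, A i ⊗ B i` is a separable state, then with `t = Tr A`, `s = Tr B` the identity
`t s 1 - A ⊗ B = (t 1 - A) ⊗ B + t 1 ⊗ (s 1 - B)` and `∑ t s = Tr ρ = 1` exhibit `1 - ρ` as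
separable, since `A ≤ (Tr A) 1` for positive semidefinite `A`. Hence `Tr (ρ N) ≤ Tr N` for every
`N ∈ SEP*`. For the discriminating measurement this gives `1 = Tr (ρ j M j) ≤ Tr (M j)`, and summing
over `j` yields `n ≤ Tr 1 = dA dB`.
-/

open scoped MatrixOrder in
theorem Matrix.PosSemidef.trace_smul_one_sub {𝕜 n : Type*} [RCLike 𝕜] [Fintype n]
    [DecidableEq n] {A : Matrix n n 𝕜} (hA : A.PosSemidef) : (A.trace • 1 - A).PosSemidef := by
  have htr : A.trace = ((∑ i, hA.isHermitian.eigenvalues i : ℝ) : 𝕜) := by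
    rw [hA.isHermitian.trace_eq_sum_eigenvalues, RCLike.ofReal_sum]
  have hle : A ≤ algebraMap ℝ (Matrix n n 𝕜) (∑ i, hA.isHermitian.eigenvalues i) := by
    refine le_algebraMap_of_spectrum_le (fun x hx => ?_) hA.isHermitian.isSelfAdjoint
    obtain ⟨i, rfl⟩ := hA.isHermitian.spectrum_real_eq_range_eigenvalues ▸ hx
    exact Finset.single_le_sum (fun j _ => hA.eigenvalues_nonneg j) (Finset.mem_univ i)
  rw [htr, ← Algebra.algebraMap_eq_smul_one]
  exact hle

theorem Matrix.sub_kronecker {R l m n p : Type*} [NonUnitalNonAssocRing R]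
    (A₁ A₂ : Matrix l m R) (B : Matrix n p R) : (A₁ - A₂) ⊗ₖ B = A₁ ⊗ₖ B - A₂ ⊗ₖ B := by
  ext; simp [sub_mul]

theorem Matrix.kronecker_sub {R l m n p : Type*} [NonUnitalNonAssocRing R]
    (A : Matrix l m R) (B₁ B₂ : Matrix n p R) : A ⊗ₖ (B₁ - B₂) = A ⊗ₖ B₁ - A ⊗ₖ B₂ := by
  ext; simp [mul_sub]

namespace SEPSeparable

variable {dA dB : ℕ}

theorem one_sub {ρ : Mat dA dB} (hρ : SEPSeparable ρ) (htr : ρ.trace = 1) :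
    SEPSeparable (1 - ρ) := by
  obtain ⟨m, A, B, hA, hB, rfl⟩ := hρ
  have hA' : ∀ i, (Fin.append (fun i => (A i).trace • 1 - A i)
      (fun i => (A i).trace • 1) i).PosSemidef := by
    refine Fin.addCases (fun i => ?_) (fun i => ?_) <;>
      simp only [Fin.append_left, Fin.append_right]
    exacts [(hA i).trace_smul_one_sub, PosSemidef.one.smul (hA i).trace_nonneg]
  have hB' : ∀ i, (Fin.append B (fun i => (B i).trace • 1 - B i) i).PosSemidef := by
    refine Fin.addCases (fun i => ?_) (fun i => ?_) <;>
      simp only [Fin.append_left, Fin.append_right]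
    exacts [hB i, (hB i).trace_smul_one_sub]
  refine ⟨m + m, _, _, hA', hB', ?_⟩
  have hsum : ∑ i, (A i).trace * (B i).trace = 1 := by
    simpa [trace_sum, trace_kronecker] using htr
  have hterm : ∀ i, ((A i).trace • 1 - A i) ⊗ₖ B i + ((A i).trace • 1) ⊗ₖ ((B i).trace • 1 - B i)
      = ((A i).trace * (B i).trace) • (1 : Mat dA dB) - A i ⊗ₖ B i := by
    intro i
    simp only [sub_kronecker, kronecker_sub, smul_kronecker, kronecker_smul, one_kronecker_one,
      smul_smul, mul_comm (B i).trace]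
    abel
  rw [Fin.sum_univ_add]
  simp only [Fin.append_left, Fin.append_right]
  rw [← Finset.sum_add_distrib, Finset.sum_congr rfl fun i _ => hterm i, Finset.sum_sub_distrib,
    ← Finset.sum_smul, hsum, one_smul]

end SEPSeparable

namespace InSEPDual

variable {dA dB : ℕ} {N : Mat dA dB}

theorem trace_mul_nonneg (hN : InSEPDual N) {X : Mat dA dB} (hX : SEPSeparable X) :
    0 ≤ (X * N).trace := by
  obtain ⟨m, A, B, hA, hB, rfl⟩ := hX
  rw [Finset.sum_mul, trace_sum]
  exact Finset.sum_nonneg fun i _ => hN.2 _ _ (hA i) (hB i)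

theorem trace_mul_le_trace (hN : InSEPDual N) {ρ : Mat dA dB} (hρ : SEPSeparable ρ)
    (htr : ρ.trace = 1) : (ρ * N).trace ≤ N.trace := by
  calc (ρ * N).trace ≤ (ρ * N).trace + ((1 - ρ) * N).trace :=
        le_add_of_nonneg_right (hN.trace_mul_nonneg (hρ.one_sub htr))
    _ = N.trace := by rw [← trace_add, ← add_mul, add_sub_cancel, one_mul]

end InSEPDual

theorem capacity_le_general (dA dB n : ℕ)
    (ρ : Fin n → Mat dA dB) (M : Fin n → Mat dA dB)
    (hρsep : ∀ i, SEPSeparable (ρ i)) (hρtr : ∀ i, (ρ i).trace = 1)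
    (hM : ∀ j, InSEPDual (M j)) (hMsum : ∑ j, M j = 1)
    (hdisc : ∀ i j, (M j * ρ i).trace = if i = j then 1 else 0) :
    n ≤ dA * dB := by
  have hone_le : ∀ j, 1 ≤ (M j).trace := fun j => by
    simpa [trace_mul_comm (ρ j), hdisc] using (hM j).trace_mul_le_trace (hρsep j) (hρtr j)
  have hcast : (n : ℂ) ≤ ((dA * dB : ℕ) : ℂ) :=
    calc (n : ℂ) = ∑ _j : Fin n, (1 : ℂ) := by simp
      _ ≤ ∑ j, (M j).trace := Finset.sum_le_sum fun j _ => hone_le j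
      _ = ((dA * dB : ℕ) : ℂ) := by simp [← trace_sum, hMsum]
  exact_mod_cast hcast

/-- The capacity of SEP is at most `dA·dB`: any family of `n` separable states that is
simultaneously perfectly distinguishable by a SEP measurement satisfies `n ≤ dA·dB`. -/
theorem capacity_le (dA dB n : ℕ) (hdA : 0 < dA) (hdB : 0 < dB) (hn : 0 < n)
    (ρ : Fin n → Mat dA dB) (M : Fin n → Mat dA dB)
    (hρsep : ∀ i, SEPSeparable (ρ i)) (hρtr : ∀ i, (ρ i).trace = 1)
    (hM : ∀ j, InSEPDual (M j)) (hMsum : ∑ j, M j = 1)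
    (hdisc : ∀ i j, (M j * ρ i).trace = if i = j then 1 else 0) :
    n ≤ dA * dB :=
  capacity_le_general dA dB n ρ M hρsep hρtr hM hMsum hdisc
end
end

section
/- Let α1, α2 ∈ [0,1] with α1 + α2 = 1 and βi = √(αi(1−αi)), and define ρ1 = [[1,0],[0,0]] ⊗ [[1,0],[0,0]] and ρ2 = [[1−α1, β1],[β1, α1]] ⊗ [[1−α2, β2],[β2, α2]] on ℂ² ⊗ ℂ². Let T1 = (1/2)[[1,0,0,−1],[0,0,0,0],[0,0,0,0],[−1,0,0,1]] and T2 = (1/2)[[0,0,0,0],[0,1,1,0],[0,1,1,0],[0,0,0,0]] (indices ordered (0,0),(0,1),(1,0),(1,1)). Then (T1+Γ(T1)) + (T2+Γ(T2)) = 1 (identity), T1+Γ(T1) and T2+Γ(T2) lie in SEP*, and Tr((T1+Γ(T1)) ρ1) = Tr((T2+Γ(T2)) ρ2) = 1 while Tr((T2+Γ(T2)) ρ1) = Tr((T1+Γ(T1)) ρ2) = 0. -/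
open Matrix Kronecker ComplexOrder

noncomputable section

/-- Partial transpose on the second factor. -/
def ptB {dA dB : ℕ} (X : Mat dA dB) : Mat dA dB :=
  Matrix.of fun p q => X (p.1, q.2) (q.1, p.2)

/-- The index identification `(a,b) ↦ 2a + b` of `Fin 2 × Fin 2` with `Fin 4`,
ordering the indices as (0,0),(0,1),(1,0),(1,1). -/
def idx4 : Fin 2 × Fin 2 → Fin 4 :=
  fun p => ⟨2 * p.1.val + p.2.val, by have := p.1.isLt; have := p.2.isLt; omega⟩

/-- View a `4×4` matrix as a matrix indexed by `Fin 2 × Fin 2` (in the order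
(0,0),(0,1),(1,0),(1,1)). -/
def toPair (M : Matrix (Fin 4) (Fin 4) ℂ) : Mat 2 2 :=
  Matrix.of fun p q => M (idx4 p) (idx4 q)

/-!
`T1` and `T2` are the projectors onto the Bell states `(|00⟩ - |11⟩)/√2` and
`(|01⟩ + |10⟩)/√2`. For any positive semidefinite `T`, the partial transpose moves onto
the product test operator: `Tr((A ⊗ B) Γ(T)) = Tr((A ⊗ Bᵀ) T)`, and `A ⊗ Bᵀ` is again
positive semidefinite, so both `T` and `Γ(T)` pair nonnegatively with `A ⊗ B`; hence
`T + Γ(T) ∈ SEP*`. The remaining claims are finite computations, where for `ρ2` one uses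
`β1 = β2` because `α2 = 1 - α1`, so that `β1 β2 = α1 α2`.
-/

open scoped MatrixOrder

theorem Matrix.PosSemidef.trace_mul_nonneg_s7 {𝕜 n : Type*} [RCLike 𝕜] [Fintype n]
    {A B : Matrix n n 𝕜} (hA : A.PosSemidef) (hB : B.PosSemidef) : 0 ≤ (A * B).trace := by
  classical
  obtain ⟨C, rfl⟩ := CStarAlgebra.nonneg_iff_eq_star_mul_self.mp hB.nonneg
  rw [star_eq_conjTranspose, ← Matrix.mul_assoc, trace_mul_comm, ← Matrix.mul_assoc]
  exact (hA.mul_mul_conjTranspose_same C).trace_nonneg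

section PartialTranspose

variable {dA dB : ℕ}

theorem conjTranspose_ptB (X : Mat dA dB) : (ptB X)ᴴ = ptB Xᴴ := rfl

theorem Matrix.IsHermitian.ptB {X : Mat dA dB} (hX : X.IsHermitian) : (ptB X).IsHermitian := by
  rw [IsHermitian, conjTranspose_ptB, hX]

theorem trace_kronecker_mul_ptB (A : Matrix (Fin dA) (Fin dA) ℂ) (B : Matrix (Fin dB) (Fin dB) ℂ)
    (X : Mat dA dB) : ((A ⊗ₖ B) * ptB X).trace = ((A ⊗ₖ Bᵀ) * X).trace := by
  simp only [trace, diag, mul_apply, Fintype.sum_prod_type, kroneckerMap_apply, ptB, of_apply,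
    transpose_apply]
  refine Finset.sum_congr rfl fun a _ => ?_
  rw [Finset.sum_comm_cycle]
  exact Finset.sum_congr rfl fun _ _ => Finset.sum_comm

theorem inSEPDual_add_ptB {T : Mat dA dB} (hT : T.PosSemidef) : InSEPDual (T + ptB T) := by
  refine ⟨hT.isHermitian.add hT.isHermitian.ptB, fun A B hA hB => ?_⟩
  rw [Matrix.mul_add, trace_add, trace_kronecker_mul_ptB]
  exact add_nonneg ((hA.kronecker hB).trace_mul_nonneg_s7 hT)
    ((hA.kronecker hB.transpose).trace_mul_nonneg_s7 hT)

end PartialTranspose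

theorem Matrix.PosSemidef.toPair {M : Matrix (Fin 4) (Fin 4) ℂ} (hM : M.PosSemidef) :
    (toPair M).PosSemidef :=
  hM.submatrix idx4

theorem posSemidef_toPair_half_vecMulVec (v : Fin 4 → ℂ) :
    (toPair ((1/2 : ℂ) • vecMulVec v (star v))).PosSemidef :=
  ((posSemidef_vecMulVec_self_star v).smul (by norm_num [Complex.le_def])).toPair

def projPhiMinus : Mat 2 2 :=
  toPair ((1/2 : ℂ) • !![1, 0, 0, -1; 0, 0, 0, 0; 0, 0, 0, 0; -1, 0, 0, 1])

def projPsiPlus : Mat 2 2 :=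
  toPair ((1/2 : ℂ) • !![0, 0, 0, 0; 0, 1, 1, 0; 0, 1, 1, 0; 0, 0, 0, 0])

theorem posSemidef_projPhiMinus : projPhiMinus.PosSemidef := by
  rw [projPhiMinus]
  convert posSemidef_toPair_half_vecMulVec ![1, 0, 0, -1] using 3
  ext i j
  fin_cases i <;> fin_cases j <;> simp [vecMulVec]

theorem posSemidef_projPsiPlus : projPsiPlus.PosSemidef := by
  rw [projPsiPlus]
  convert posSemidef_toPair_half_vecMulVec ![0, 1, 1, 0] using 3
  ext i j
  fin_cases i <;> fin_cases j <;> simp [vecMulVec]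

theorem add_ptB_projPhiMinus_add_add_ptB_projPsiPlus :
    (projPhiMinus + ptB projPhiMinus) + (projPsiPlus + ptB projPsiPlus) = 1 := by
  ext ⟨a, b⟩ ⟨c, d⟩
  fin_cases a <;> fin_cases b <;> fin_cases c <;> fin_cases d <;>
    simp [projPhiMinus, projPsiPlus, toPair, ptB, idx4, one_apply] <;> norm_num

theorem trace_kronecker_mul_add_ptB_projPhiMinus (A B : Matrix (Fin 2) (Fin 2) ℂ) :
    ((A ⊗ₖ B) * (projPhiMinus + ptB projPhiMinus)).trace =
      A 0 0 * B 0 0 + A 1 1 * B 1 1 - (A 0 1 + A 1 0) * (B 0 1 + B 1 0) / 2 := by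
  simp [projPhiMinus, trace, mul_apply, Fintype.sum_prod_type, Fin.sum_univ_two, toPair, ptB, idx4]
  ring

theorem trace_kronecker_mul_add_ptB_projPsiPlus (A B : Matrix (Fin 2) (Fin 2) ℂ) :
    ((A ⊗ₖ B) * (projPsiPlus + ptB projPsiPlus)).trace =
      A 0 0 * B 1 1 + A 1 1 * B 0 0 + (A 0 1 + A 1 0) * (B 0 1 + B 1 0) / 2 := by
  simp [projPsiPlus, trace, mul_apply, Fintype.sum_prod_type, Fin.sum_univ_two, toPair, ptB, idx4]
  ring

theorem example_measurement_general (α1 α2 β1 β2 : ℝ)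
    (hα1 : α1 ∈ Set.Icc (0:ℝ) 1) (hsum : α1 + α2 = 1)
    (hβ1 : β1 = Real.sqrt (α1 * (1 - α1))) (hβ2 : β2 = Real.sqrt (α2 * (1 - α2)))
    (ρ1 ρ2 : Mat 2 2) (T1 T2 : Mat 2 2)
    (hρ1 : ρ1 = (!![(1:ℂ), 0; 0, 0]) ⊗ₖ (!![(1:ℂ), 0; 0, 0]))
    (hρ2 : ρ2 = (!![((1 - α1 : ℝ) : ℂ), (β1 : ℝ); (β1 : ℝ), (α1 : ℝ)]) ⊗ₖ
      (!![((1 - α2 : ℝ) : ℂ), (β2 : ℝ); (β2 : ℝ), (α2 : ℝ)]))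
    (hT1 : T1 = toPair ((1/2 : ℂ) •
      !![1, 0, 0, -1; 0, 0, 0, 0; 0, 0, 0, 0; -1, 0, 0, 1]))
    (hT2 : T2 = toPair ((1/2 : ℂ) •
      !![0, 0, 0, 0; 0, 1, 1, 0; 0, 1, 1, 0; 0, 0, 0, 0])) :
    (T1 + ptB T1) + (T2 + ptB T2) = 1 ∧
    InSEPDual (T1 + ptB T1) ∧ InSEPDual (T2 + ptB T2) ∧
    ((T1 + ptB T1) * ρ1).trace = 1 ∧ ((T2 + ptB T2) * ρ2).trace = 1 ∧
    ((T2 + ptB T2) * ρ1).trace = 0 ∧ ((T1 + ptB T1) * ρ2).trace = 0 := by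
  obtain rfl : T1 = projPhiMinus := hT1
  obtain rfl : T2 = projPsiPlus := hT2
  subst hρ1 hρ2
  have hβ : (β1 : ℂ) * β2 = α1 * α2 := by
    obtain rfl : α2 = 1 - α1 := by linarith
    rw [hβ1, hβ2, sub_sub_cancel, mul_comm (1 - α1), ← Complex.ofReal_mul,
      Real.mul_self_sqrt (mul_nonneg hα1.1 (sub_nonneg.2 hα1.2)), Complex.ofReal_mul]
  have hsumC : (α1 : ℂ) + α2 = 1 := by exact_mod_cast hsum
  refine ⟨add_ptB_projPhiMinus_add_add_ptB_projPsiPlus, inSEPDual_add_ptB posSemidef_projPhiMinus,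
    inSEPDual_add_ptB posSemidef_projPsiPlus, ?_, ?_, ?_, ?_⟩ <;>
  rw [trace_mul_comm] <;>
  simp only [trace_kronecker_mul_add_ptB_projPhiMinus, trace_kronecker_mul_add_ptB_projPsiPlus,
    of_apply, cons_val', cons_val_zero, cons_val_one, empty_val', cons_val_fin_one,
    Complex.ofReal_sub, Complex.ofReal_one]
  · norm_num
  · linear_combination 2 * hβ + hsumC
  · norm_num
  · linear_combination -2 * hβ - hsumC

/-- Example: for `α1 + α2 = 1`, the measurement `{T1 + Γ(T1), T2 + Γ(T2)}` is a SEP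
measurement perfectly discriminating the two non-orthogonal separable pure states. -/
theorem example_measurement (α1 α2 β1 β2 : ℝ)
    (hα1 : α1 ∈ Set.Icc (0:ℝ) 1) (hα2 : α2 ∈ Set.Icc (0:ℝ) 1) (hsum : α1 + α2 = 1)
    (hβ1 : β1 = Real.sqrt (α1 * (1 - α1))) (hβ2 : β2 = Real.sqrt (α2 * (1 - α2)))
    (ρ1 ρ2 : Mat 2 2) (T1 T2 : Mat 2 2)
    (hρ1 : ρ1 = (!![(1:ℂ), 0; 0, 0]) ⊗ₖ (!![(1:ℂ), 0; 0, 0]))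
    (hρ2 : ρ2 = (!![((1 - α1 : ℝ) : ℂ), (β1 : ℝ); (β1 : ℝ), (α1 : ℝ)]) ⊗ₖ
      (!![((1 - α2 : ℝ) : ℂ), (β2 : ℝ); (β2 : ℝ), (α2 : ℝ)]))
    (hT1 : T1 = toPair ((1/2 : ℂ) •
      !![1, 0, 0, -1; 0, 0, 0, 0; 0, 0, 0, 0; -1, 0, 0, 1]))
    (hT2 : T2 = toPair ((1/2 : ℂ) •
      !![0, 0, 0, 0; 0, 1, 1, 0; 0, 1, 1, 0; 0, 0, 0, 0])) :
    (T1 + ptB T1) + (T2 + ptB T2) = 1 ∧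
    InSEPDual (T1 + ptB T1) ∧ InSEPDual (T2 + ptB T2) ∧
    ((T1 + ptB T1) * ρ1).trace = 1 ∧ ((T2 + ptB T2) * ρ2).trace = 1 ∧
    ((T2 + ptB T2) * ρ1).trace = 0 ∧ ((T1 + ptB T1) * ρ2).trace = 0 :=
  example_measurement_general α1 α2 β1 β2 hα1 hsum hβ1 hβ2 ρ1 ρ2 T1 T2 hρ1 hρ2 hT1 hT2
end
end

section
/- Let u1, u2 be unit vectors in ℂ^d with |⟨u1, u2⟩|² ≤ 1/2, and set σi = ui uiᴴ for i = 1, 2. Then σ1 ⊗ σ1 and σ2 ⊗ σ2 are perfectly distinguishable in SEP on the bipartite system ℂ^d ⊗ ℂ^d. -/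
open Matrix Kronecker ComplexOrder

noncomputable section

/-- Pure state (outer product `v vᴴ`) of a vector. -/
def outer {d : ℕ} (u : Fin d → ℂ) : Matrix (Fin d) (Fin d) ℂ :=
  vecMulVec u (star u)

/-!
Rotate the phase of `u1` so that `r = ⟨u1, u2⟩ ≥ 0`, and write `u1 = α e₁ + β e₂`,
`u2 = α e₁ - β e₂` for an orthonormal pair `e₁, e₂`, so that `α² - β² = r` and
`w = 2αβ = √(1 - r²)`. For `X = e₁e₂ᴴ + e₂e₁ᴴ` and `Z = e₁e₁ᴴ - e₂e₂ᴴ` the two states have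
`tr (σ X) = ±w` and `tr (σ Z) = r`, so the observable
`T = ((w² - r²) (X ⊗ 1 + 1 ⊗ X) + r (X ⊗ Z + Z ⊗ X)) / (2w³)` equals `±1` on `σᵢ ⊗ σᵢ`, and
`M₁ = (1 + T)/2`, `M₂ = (1 - T)/2` discriminate them perfectly. For positive semidefinite `A`,
the pair `(tr (A X), tr (A Z))` lies in the disc of radius `tr A`, so on `A ⊗ B` the trace of
`M₁` is a bilinear form on two Lorentz cones; it is nonnegative exactly because `r ≤ w`, that is
`r² ≤ 1/2`. Replacing `e₂` by `-e₂` swaps the two states and `T` with `-T`, which handles `M₂`.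
-/

def pauliX : Matrix (Fin 2) (Fin 2) ℂ := !![0, 1; 1, 0]

def pauliZ : Matrix (Fin 2) (Fin 2) ℂ := !![1, 0; 0, -1]

lemma isHermitian_pauliX : pauliX.IsHermitian := by
  ext i j; fin_cases i <;> fin_cases j <;> simp [pauliX]

lemma isHermitian_pauliZ : pauliZ.IsHermitian := by
  ext i j; fin_cases i <;> fin_cases j <;> simp [pauliZ]

lemma pauliZ_mul_pauliZ : pauliZ * pauliZ = 1 := by
  ext i j; fin_cases i <;> fin_cases j <;> simp [pauliZ]

lemma pauliZ_mul_pauliX_mul_pauliZ : pauliZ * pauliX * pauliZ = -pauliX := by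
  ext i j; fin_cases i <;> fin_cases j <;> simp [pauliZ, pauliX]

lemma Matrix.PosSemidef.exists_bloch_fin_two {C : Matrix (Fin 2) (Fin 2) ℂ} (hC : C.PosSemidef) :
    ∃ a x z : ℝ, C.trace = a ∧ (C * pauliX).trace = x ∧ (C * pauliZ).trace = z ∧
      x ^ 2 + z ^ 2 ≤ a ^ 2 := by
  obtain ⟨-, h00⟩ := Complex.nonneg_iff.mp (hC.diag_nonneg (i := 0))
  obtain ⟨-, h11⟩ := Complex.nonneg_iff.mp (hC.diag_nonneg (i := 1))
  have h10 : C 1 0 = star (C 0 1) := (congrFun (congrFun hC.isHermitian.eq 1) 0).symm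
  -- `det C ≥ 0` reads `|C 0 1|² ≤ C 0 0 * C 1 1`, which gives the bound
  have hdet := (Complex.nonneg_iff.mp hC.det_nonneg).1
  rw [C.eta_fin_two] at hdet ⊢
  simp only [det_fin_two_of, Complex.sub_re, Complex.mul_re, h10, Complex.star_def,
    Complex.conj_re, Complex.conj_im, ← h00, ← h11] at hdet
  refine ⟨(C 0 0).re + (C 1 1).re, 2 * (C 0 1).re, (C 0 0).re - (C 1 1).re, ?_, ?_, ?_, ?_⟩
  · simp [trace_fin_two, Complex.ext_iff, ← h00, ← h11]
  · simp [trace_fin_two, pauliX, h10, Complex.ext_iff]; ring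
  · simp [trace_fin_two, pauliZ, Complex.ext_iff, ← h00, ← h11]; ring
  · nlinarith [sq_nonneg (C 0 1).im]

variable {n m : Type*}

lemma Matrix.PosSemidef.trace_conjTranspose_mul_mul_le [Fintype n] [DecidableEq n] [Fintype m]
    [DecidableEq m] {A : Matrix n n ℂ} (hA : A.PosSemidef) {E : Matrix n m ℂ} (hE : Eᴴ * E = 1) :
    (Eᴴ * A * E).trace ≤ A.trace := by
  set Q : Matrix n n ℂ := 1 - E * Eᴴ
  have hQ : Qᴴ = Q := by simp [Q]
  have hQQ : Q * Q = Q := by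
    have hP : E * Eᴴ * (E * Eᴴ) = E * Eᴴ := by
      rw [Matrix.mul_assoc, ← Matrix.mul_assoc Eᴴ, hE, Matrix.one_mul]
    simp only [Q, sub_mul, mul_sub, Matrix.one_mul, Matrix.mul_one, hP, sub_self, sub_zero]
  have key : (Qᴴ * A * Q).trace = A.trace - (Eᴴ * A * E).trace := by
    rw [hQ, trace_mul_cycle, hQQ, Matrix.mul_assoc, trace_mul_comm Eᴴ, Matrix.mul_assoc, sub_mul,
      Matrix.one_mul, trace_sub, trace_mul_comm]
  exact sub_nonneg.mp (key ▸ (hA.conjTranspose_mul_mul_same Q).trace_nonneg)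

lemma trace_isometry_conj [Fintype n] [Fintype m] [DecidableEq m] {E : Matrix n m ℂ}
    (hE : Eᴴ * E = 1) (ρ : Matrix m m ℂ) : (E * ρ * Eᴴ).trace = ρ.trace := by
  rw [trace_mul_comm, ← Matrix.mul_assoc, hE, Matrix.one_mul]

lemma trace_isometry_conj_mul_isometry_conj [Fintype n] [Fintype m] [DecidableEq m]
    {E : Matrix n m ℂ} (hE : Eᴴ * E = 1) (ρ σ : Matrix m m ℂ) :
    (E * ρ * Eᴴ * (E * σ * Eᴴ)).trace = (ρ * σ).trace := by
  rw [show E * ρ * Eᴴ * (E * σ * Eᴴ) = E * (ρ * (Eᴴ * E) * σ) * Eᴴ by simp only [Matrix.mul_assoc],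
    hE, Matrix.mul_one, trace_isometry_conj hE]

/-- An isometry `E : ℂ² → ℂⁿ` (`Eᴴ * E = 1`) stands for the orthonormal pair of its columns;
`planeX E` and `planeZ E` are the Pauli operators `X`, `Z` of the plane they span. -/
def planeX (E : Matrix n (Fin 2) ℂ) : Matrix n n ℂ := E * pauliX * Eᴴ

def planeZ (E : Matrix n (Fin 2) ℂ) : Matrix n n ℂ := E * pauliZ * Eᴴ

lemma isometry_mul_pauliZ [Fintype n] {E : Matrix n (Fin 2) ℂ} (hE : Eᴴ * E = 1) :
    (E * pauliZ)ᴴ * (E * pauliZ) = 1 := by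
  rw [conjTranspose_mul, isHermitian_pauliZ.eq, Matrix.mul_assoc, ← Matrix.mul_assoc Eᴴ, hE,
    Matrix.one_mul, pauliZ_mul_pauliZ]

lemma mul_pauliZ_mulVec (E : Matrix n (Fin 2) ℂ) (a b : ℂ) :
    (E * pauliZ) *ᵥ ![a, b] = E *ᵥ ![a, -b] := by
  rw [← mulVec_mulVec]
  congr 1
  ext i; fin_cases i <;> simp [pauliZ]

lemma planeX_mul_pauliZ (E : Matrix n (Fin 2) ℂ) : planeX (E * pauliZ) = -planeX E := by
  rw [planeX, planeX, conjTranspose_mul, isHermitian_pauliZ.eq,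
    show E * pauliZ * pauliX * (pauliZ * Eᴴ) = E * (pauliZ * pauliX * pauliZ) * Eᴴ by
      simp only [Matrix.mul_assoc],
    pauliZ_mul_pauliX_mul_pauliZ, Matrix.mul_neg, Matrix.neg_mul]

lemma planeZ_mul_pauliZ (E : Matrix n (Fin 2) ℂ) : planeZ (E * pauliZ) = planeZ E := by
  rw [planeZ, planeZ, conjTranspose_mul, isHermitian_pauliZ.eq,
    show E * pauliZ * pauliZ * (pauliZ * Eᴴ) = E * (pauliZ * pauliZ * pauliZ) * Eᴴ by
      simp only [Matrix.mul_assoc],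
    pauliZ_mul_pauliZ, Matrix.one_mul]

lemma Matrix.PosSemidef.exists_bloch [Fintype n] [DecidableEq n] {A : Matrix n n ℂ}
    (hA : A.PosSemidef) {E : Matrix n (Fin 2) ℂ} (hE : Eᴴ * E = 1) :
    ∃ a x z : ℝ, A.trace = a ∧ (A * planeX E).trace = x ∧ (A * planeZ E).trace = z ∧
      0 ≤ a ∧ x ^ 2 + z ^ 2 ≤ a ^ 2 := by
  have hC := hA.conjTranspose_mul_mul_same E
  obtain ⟨c, x, z, hc, hx, hz, hxz⟩ := hC.exists_bloch_fin_two
  obtain ⟨a, -, ha⟩ := RCLike.nonneg_iff_exists_ofReal.mp hA.trace_nonneg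
  have hca : c ≤ a := by
    have := hA.trace_conjTranspose_mul_mul_le hE
    rw [hc, ← ha] at this
    exact Complex.real_le_real.mp this
  have hc0 : 0 ≤ c := Complex.zero_le_real.mp (hc ▸ hC.trace_nonneg)
  have compress (σ : Matrix (Fin 2) (Fin 2) ℂ) :
      (A * (E * σ * Eᴴ)).trace = (Eᴴ * A * E * σ).trace := by
    rw [← Matrix.mul_assoc, trace_mul_comm, ← Matrix.mul_assoc, ← Matrix.mul_assoc]
  exact ⟨a, x, z, ha.symm, compress _ ▸ hx, compress _ ▸ hz, by linarith, by nlinarith⟩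

lemma lorentz_bilinear_nonneg {r w : ℝ} (hr : 0 ≤ r) (hrw : r ≤ w) (hw : w ^ 2 + r ^ 2 = 1)
    {a₁ x₁ z₁ a₂ x₂ z₂ : ℝ} (ha₁ : 0 ≤ a₁) (ha₂ : 0 ≤ a₂)
    (h₁ : x₁ ^ 2 + z₁ ^ 2 ≤ a₁ ^ 2) (h₂ : x₂ ^ 2 + z₂ ^ 2 ≤ a₂ ^ 2) :
    0 ≤ 2 * w ^ 3 * (a₁ * a₂) + (w ^ 2 - r ^ 2) * (x₁ * a₂ + a₁ * x₂) +
      r * (x₁ * z₂ + z₁ * x₂) := by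
  rcases ha₁.eq_or_lt with rfl | ha₁
  · obtain ⟨rfl, rfl⟩ : x₁ = 0 ∧ z₁ = 0 := ⟨by nlinarith, by nlinarith⟩
    simp
  rcases ha₂.eq_or_lt with rfl | ha₂
  · obtain ⟨rfl, rfl⟩ : x₂ = 0 ∧ z₂ = 0 := ⟨by nlinarith, by nlinarith⟩
    simp
  -- multiplied by `a₁ * a₂`, the inequality has a polynomial sum-of-squares certificate
  refine (mul_nonneg_iff_of_pos_left (mul_pos ha₁ ha₂)).mp ?_
  have hw0 : 0 ≤ w := hr.trans hrw
  have hwr : 0 ≤ w - r := sub_nonneg.2 hrw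
  rw [show 2 * w ^ 3 = w + w * (w ^ 2 - r ^ 2) by linear_combination w * hw]
  nlinarith [mul_nonneg (mul_nonneg hw0 (sq_nonneg a₂)) (sub_nonneg.2 h₁),
    mul_nonneg (mul_nonneg hw0 (sq_nonneg a₁)) (sub_nonneg.2 h₂),
    mul_nonneg hr (sq_nonneg (a₂ * x₁ + w * a₁ * a₂ + a₁ * z₂ - r * a₁ * a₂)),
    mul_nonneg hr (sq_nonneg (a₁ * x₂ + w * a₁ * a₂ + a₂ * z₁ - r * a₁ * a₂)),
    mul_nonneg hwr (sq_nonneg (a₂ * x₁ + w * a₁ * a₂)),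
    mul_nonneg hwr (sq_nonneg (a₁ * z₂ - r * a₁ * a₂)),
    mul_nonneg hwr (sq_nonneg (a₁ * x₂ + w * a₁ * a₂)),
    mul_nonneg hwr (sq_nonneg (a₂ * z₁ - r * a₁ * a₂))]

def twoCopyTest [DecidableEq n] (r w : ℝ) (E : Matrix n (Fin 2) ℂ) : Matrix (n × n) (n × n) ℂ :=
  (1 / 2 : ℂ) • (1 + (((w : ℂ) ^ 2 - r ^ 2) / (2 * w ^ 3)) • (planeX E ⊗ₖ 1 + 1 ⊗ₖ planeX E) +
    ((r : ℂ) / (2 * w ^ 3)) • (planeX E ⊗ₖ planeZ E + planeZ E ⊗ₖ planeX E))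

lemma trace_kronecker_mul_twoCopyTest [Fintype n] [DecidableEq n] {r w : ℝ} (hw : w ≠ 0)
    (E : Matrix n (Fin 2) ℂ) (A B : Matrix n n ℂ) :
    ((A ⊗ₖ B) * twoCopyTest r w E).trace =
      (2 * w ^ 3 * (A.trace * B.trace) +
        ((w : ℂ) ^ 2 - r ^ 2) * ((A * planeX E).trace * B.trace + A.trace * (B * planeX E).trace) +
        r * ((A * planeX E).trace * (B * planeZ E).trace +
          (A * planeZ E).trace * (B * planeX E).trace)) / (4 * w ^ 3) := by
  simp only [twoCopyTest, mul_add, Matrix.mul_smul, trace_add, trace_smul,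
    ← mul_kronecker_mul, Matrix.mul_one, trace_kronecker, smul_eq_mul]
  field_simp
  ring

lemma isHermitian_twoCopyTest [DecidableEq n] (r w : ℝ) (E : Matrix n (Fin 2) ℂ) :
    (twoCopyTest r w E).IsHermitian := by
  have hX : (planeX E)ᴴ = planeX E := isHermitian_mul_mul_conjTranspose E isHermitian_pauliX
  have hZ : (planeZ E)ᴴ = planeZ E := isHermitian_mul_mul_conjTranspose E isHermitian_pauliZ
  simp [IsHermitian, twoCopyTest, conjTranspose_kronecker, hX, hZ, add_comm]

lemma inSEPDual_twoCopyTest {d : ℕ} {r w : ℝ} (hr : 0 ≤ r) (hrw : r ≤ w) (hw : w ^ 2 + r ^ 2 = 1)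
    {E : Matrix (Fin d) (Fin 2) ℂ} (hE : Eᴴ * E = 1) : InSEPDual (twoCopyTest r w E) := by
  refine ⟨isHermitian_twoCopyTest r w E, fun A B hA hB => ?_⟩
  obtain ⟨a₁, x₁, z₁, hA1, hAX, hAZ, ha₁, h₁⟩ := hA.exists_bloch hE
  obtain ⟨a₂, x₂, z₂, hB1, hBX, hBZ, ha₂, h₂⟩ := hB.exists_bloch hE
  have hw0 : 0 < w := by nlinarith
  rw [trace_kronecker_mul_twoCopyTest hw0.ne', hA1, hAX, hAZ, hB1, hBX, hBZ]
  exact_mod_cast div_nonneg (lorentz_bilinear_nonneg hr hrw hw ha₁ ha₂ h₁ h₂) (by positivity)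

lemma outer_mulVec {d : ℕ} (E : Matrix (Fin d) (Fin 2) ℂ) (ψ : Fin 2 → ℂ) :
    outer (E *ᵥ ψ) = E * outer ψ * Eᴴ := by
  rw [outer, outer, star_mulVec, ← mul_vecMulVec, Matrix.mul_assoc, vecMulVec_mul]

lemma trace_twoCopyTest_mul_outer_kronecker {d : ℕ} {r w α β : ℝ} (hw : w ≠ 0)
    (hαβ : α ^ 2 + β ^ 2 = 1) (hr : α ^ 2 - β ^ 2 = r) {E : Matrix (Fin d) (Fin 2) ℂ}
    (hE : Eᴴ * E = 1) :
    (twoCopyTest r w E * (outer (E *ᵥ ![(α : ℂ), β]) ⊗ₖ outer (E *ᵥ ![(α : ℂ), β]))).trace =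
      (w + 2 * α * β) / (2 * w) := by
  have hψ : outer ![(α : ℂ), β] = !![(α : ℂ) * α, α * β; β * α, β * β] := by
    ext i j; fin_cases i <;> fin_cases j <;> simp [outer, vecMulVec_apply]
  have h1 : (outer ![(α : ℂ), β]).trace = 1 := by
    simp only [hψ, trace_fin_two_of]
    exact_mod_cast by linear_combination hαβ
  have hX : (outer ![(α : ℂ), β] * pauliX).trace = 2 * α * β := by
    simp [hψ, pauliX, trace_fin_two]; ring
  have hZ : (outer ![(α : ℂ), β] * pauliZ).trace = r := by
    simp [hψ, pauliZ, trace_fin_two]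
    exact_mod_cast by linear_combination hr
  rw [trace_mul_comm, trace_kronecker_mul_twoCopyTest hw, planeX, planeZ, outer_mulVec,
    trace_isometry_conj hE, trace_isometry_conj_mul_isometry_conj hE,
    trace_isometry_conj_mul_isometry_conj hE, h1, hX, hZ]
  field_simp
  ring

lemma twoCopyTest_add_twoCopyTest_mul_pauliZ [DecidableEq n] (r w : ℝ) (E : Matrix n (Fin 2) ℂ) :
    twoCopyTest r w E + twoCopyTest r w (E * pauliZ) = 1 := by
  simp only [twoCopyTest, planeX_mul_pauliZ, planeZ_mul_pauliZ, ← neg_one_smul ℂ (planeX E),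
    smul_kronecker, kronecker_smul]
  module

lemma perfDistSEP_outer_kronecker_of_isometry {d : ℕ} {α β : ℝ} (hβ : 0 < β) (hβα : β ≤ α)
    (hαβ : α ^ 2 - β ^ 2 ≤ 2 * α * β) (hnorm : α ^ 2 + β ^ 2 = 1)
    {E : Matrix (Fin d) (Fin 2) ℂ} (hE : Eᴴ * E = 1) :
    PerfDistSEP (outer (E *ᵥ ![(α : ℂ), β]) ⊗ₖ outer (E *ᵥ ![(α : ℂ), β]))
      (outer (E *ᵥ ![(α : ℂ), -β]) ⊗ₖ outer (E *ᵥ ![(α : ℂ), -β])) := by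
  set w := 2 * α * β
  have hw : w ^ 2 + (α ^ 2 - β ^ 2) ^ 2 = 1 := by linear_combination (α ^ 2 + β ^ 2 + 1) * hnorm
  have hw0 : w ≠ 0 := (mul_pos (mul_pos two_pos (hβ.trans_le hβα)) hβ).ne'
  have hwC : (w : ℂ) = 2 * α * β := by push_cast [w]; ring
  have hE' := isometry_mul_pauliZ hE
  have hv : E *ᵥ ![(α : ℂ), β] = (E * pauliZ) *ᵥ ![(α : ℂ), ((-β : ℝ) : ℂ)] := by
    rw [mul_pauliZ_mulVec, Complex.ofReal_neg, neg_neg]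
  have hu : E *ᵥ ![(α : ℂ), -β] = (E * pauliZ) *ᵥ ![(α : ℂ), β] := (mul_pauliZ_mulVec E _ _).symm
  have hflip : E *ᵥ ![(α : ℂ), -β] = E *ᵥ ![(α : ℂ), ((-β : ℝ) : ℂ)] := by rw [Complex.ofReal_neg]
  have hnorm' : α ^ 2 + (-β) ^ 2 = 1 := by linear_combination hnorm
  have hr' : α ^ 2 - (-β) ^ 2 = α ^ 2 - β ^ 2 := by ring
  refine ⟨twoCopyTest (α ^ 2 - β ^ 2) w E, twoCopyTest (α ^ 2 - β ^ 2) w (E * pauliZ),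
    inSEPDual_twoCopyTest (by nlinarith) hαβ hw hE, inSEPDual_twoCopyTest (by nlinarith) hαβ hw hE',
    twoCopyTest_add_twoCopyTest_mul_pauliZ _ _ E, ?_, ?_, ?_, ?_⟩
  · rw [trace_twoCopyTest_mul_outer_kronecker hw0 hnorm rfl hE]
    field_simp
    linear_combination -hwC
  · rw [hu, trace_twoCopyTest_mul_outer_kronecker hw0 hnorm rfl hE']
    field_simp
    linear_combination -hwC
  · rw [hv, trace_twoCopyTest_mul_outer_kronecker hw0 hnorm' hr' hE']
    push_cast
    field_simp
    linear_combination hwC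
  · rw [hflip, trace_twoCopyTest_mul_outer_kronecker hw0 hnorm' hr' hE]
    push_cast
    field_simp
    linear_combination hwC

lemma conjTranspose_mul_self_of_cols [Fintype n] (e₁ e₂ : n → ℂ) :
    (of fun i => ![e₁ i, e₂ i])ᴴ * (of fun i => ![e₁ i, e₂ i]) =
      !![star e₁ ⬝ᵥ e₁, star e₁ ⬝ᵥ e₂; star e₂ ⬝ᵥ e₁, star e₂ ⬝ᵥ e₂] := by
  ext j k; fin_cases j <;> fin_cases k <;> rfl

lemma of_cols_mulVec (e₁ e₂ : n → ℂ) (a b : ℂ) :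
    (of fun i => ![e₁ i, e₂ i]) *ᵥ ![a, b] = a • e₁ + b • e₂ := by
  ext i; simp [mulVec, dotProduct, mul_comm]

lemma exists_isometry_mulVec_eq [Fintype n] {v u : n → ℂ} {r α β : ℝ} (hv : star v ⬝ᵥ v = 1)
    (hu : star u ⬝ᵥ u = 1) (hvu : star v ⬝ᵥ u = r) (hα : 2 * α ^ 2 = 1 + r)
    (hβ : 2 * β ^ 2 = 1 - r) (hα0 : α ≠ 0) (hβ0 : β ≠ 0) :
    ∃ E : Matrix n (Fin 2) ℂ, Eᴴ * E = 1 ∧ E *ᵥ ![(α : ℂ), β] = v ∧ E *ᵥ ![(α : ℂ), -β] = u := by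
  have huv : star u ⬝ᵥ v = r := by rw [star_dotProduct, hvu, Complex.star_def, Complex.conj_ofReal]
  have hαC : (2 : ℂ) * α ^ 2 = 1 + r := by exact_mod_cast hα
  have hβC : (2 : ℂ) * β ^ 2 = 1 - r := by exact_mod_cast hβ
  have hα0C : (α : ℂ) ≠ 0 := Complex.ofReal_ne_zero.mpr hα0
  have hβ0C : (β : ℂ) ≠ 0 := Complex.ofReal_ne_zero.mpr hβ0
  have hstar (x : ℝ) : star (2 * (x : ℂ))⁻¹ = (2 * (x : ℂ))⁻¹ := by
    simp [Complex.conj_ofReal]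
  set e₁ : n → ℂ := (2 * (α : ℂ))⁻¹ • (v + u)
  set e₂ : n → ℂ := (2 * (β : ℂ))⁻¹ • (v - u)
  have h11 : star e₁ ⬝ᵥ e₁ = 1 := by
    simp only [e₁, star_smul, hstar, smul_dotProduct, dotProduct_smul, star_add, add_dotProduct,
      dotProduct_add, hv, hu, hvu, huv, smul_eq_mul]
    field_simp
    linear_combination (-2 : ℂ) * hαC
  have h22 : star e₂ ⬝ᵥ e₂ = 1 := by
    simp only [e₂, star_smul, hstar, smul_dotProduct, dotProduct_smul, star_sub, sub_dotProduct,
      dotProduct_sub, hv, hu, hvu, huv, smul_eq_mul]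
    field_simp
    linear_combination (-2 : ℂ) * hβC
  have h12 : star e₁ ⬝ᵥ e₂ = 0 := by
    simp only [e₁, e₂, star_smul, hstar, smul_dotProduct, dotProduct_smul, star_add,
      add_dotProduct, dotProduct_sub, hv, hu, hvu, huv, smul_eq_mul]
    ring
  have h21 : star e₂ ⬝ᵥ e₁ = 0 := by rw [star_dotProduct, h12, star_zero]
  refine ⟨of fun i => ![e₁ i, e₂ i], ?_, ?_, ?_⟩
  · rw [conjTranspose_mul_self_of_cols, h11, h12, h21, h22, one_fin_two]
  all_goals
    rw [of_cols_mulVec]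
    ext i
    simp [e₁, e₂]
    field_simp
    ring

lemma exists_outer_eq_star_dotProduct_eq_norm {d : ℕ} {u₁ : Fin d → ℂ} (hu₁ : star u₁ ⬝ᵥ u₁ = 1)
    (u₂ : Fin d → ℂ) :
    ∃ v, outer v = outer u₁ ∧ star v ⬝ᵥ v = 1 ∧ star v ⬝ᵥ u₂ = ‖star u₁ ⬝ᵥ u₂‖ := by
  set z := star u₁ ⬝ᵥ u₂
  set c := Complex.exp (z.arg * Complex.I)
  have hc : star c * c = 1 := by
    rw [Complex.star_def, Complex.conj_mul', Complex.norm_exp_ofReal_mul_I]; simp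
  refine ⟨c • u₁, ?_, ?_, ?_⟩
  · rw [outer, outer, star_smul, smul_vecMulVec, vecMulVec_smul, smul_smul, mul_comm, hc,
      one_smul]
  · rw [star_smul, smul_dotProduct, dotProduct_smul, hu₁, smul_eq_mul, smul_eq_mul, mul_one, hc]
  · calc star (c • u₁) ⬝ᵥ u₂ = ‖z‖ * (star c * c) := by
          rw [star_smul, smul_dotProduct, smul_eq_mul, mul_left_comm,
            Complex.norm_mul_exp_arg_mul_I]
      _ = ‖z‖ := by rw [hc, mul_one]

lemma star_dotProduct_self_eq_one {d : ℕ} {u : Fin d → ℂ} (hu : ∑ i, Complex.normSq (u i) = 1) :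
    star u ⬝ᵥ u = 1 := by
  rw [show star u ⬝ᵥ u = ((∑ i, Complex.normSq (u i) : ℝ) : ℂ) by
      push_cast; simp [dotProduct, Complex.normSq_eq_conj_mul_self],
    hu, Complex.ofReal_one]

theorem two_copy_discrimination_general (d : ℕ) (u1 u2 : Fin d → ℂ)
    (h1 : ∑ i, Complex.normSq (u1 i) = 1) (h2 : ∑ i, Complex.normSq (u2 i) = 1)
    (hover : ‖∑ i, (starRingEnd ℂ) (u1 i) * u2 i‖ ^ 2 ≤ 1 / 2) :
    PerfDistSEP (outer u1 ⊗ₖ outer u1) (outer u2 ⊗ₖ outer u2) := by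
  set r := ‖star u1 ⬝ᵥ u2‖
  have hr : 0 ≤ r ∧ r ^ 2 ≤ 1 / 2 := ⟨norm_nonneg _, hover⟩
  obtain ⟨v, hvu1, hv, hvu2⟩ :=
    exists_outer_eq_star_dotProduct_eq_norm (star_dotProduct_self_eq_one h1) u2
  set α := √((1 + r) / 2)
  set β := √((1 - r) / 2)
  have hα : 2 * α ^ 2 = 1 + r := by rw [Real.sq_sqrt (by nlinarith)]; ring
  have hβ : 2 * β ^ 2 = 1 - r := by rw [Real.sq_sqrt (by nlinarith)]; ring
  have hα0 : 0 < α := Real.sqrt_pos.mpr (by nlinarith)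
  have hβ0 : 0 < β := Real.sqrt_pos.mpr (by nlinarith)
  obtain ⟨E, hE, hEv, hEu⟩ := exists_isometry_mulVec_eq hv (star_dotProduct_self_eq_one h2) hvu2
    hα hβ hα0.ne' hβ0.ne'
  have hw : (2 * α * β) ^ 2 = 1 - r ^ 2 := by linear_combination (2 * β ^ 2) * hα + (1 + r) * hβ
  rw [← hvu1, ← hEv, ← hEu]
  exact perfDistSEP_outer_kronecker_of_isometry hβ0 (by nlinarith)
    (by nlinarith [mul_pos hα0 hβ0]) (by linarith) hE

/-- Two-copy discrimination: if `|⟨u1, u2⟩|² ≤ 1/2`, then `σ1 ⊗ σ1` and `σ2 ⊗ σ2` are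
perfectly distinguishable in SEP. -/
theorem two_copy_discrimination (d : ℕ) (hd : 0 < d) (u1 u2 : Fin d → ℂ)
    (h1 : ∑ i, Complex.normSq (u1 i) = 1) (h2 : ∑ i, Complex.normSq (u2 i) = 1)
    (hover : ‖∑ i, (starRingEnd ℂ) (u1 i) * u2 i‖ ^ 2 ≤ 1 / 2) :
    PerfDistSEP (outer u1 ⊗ₖ outer u1) (outer u2 ⊗ₖ outer u2) :=
  two_copy_discrimination_general d u1 u2 h1 h2 hover
end
end

section
/- Let α1, α2 ∈ (0,1] with γ := α1 + α2 satisfying 1 < γ ≤ 2, and βi := √(αi(1−αi)). Then the real symmetric 4×4 matrix T1 = (1/(2γ))·[[γ, 0, 0, −β1β2γ/(α1α2)], [0, γ−1, 0, −(γ−1)β1/α1], [0, 0, γ−1, −(γ−1)β2/α2], [−β1β2γ/(α1α2), −(γ−1)β1/α1, −(γ−1)β2/α2, 2−γ]] is positive semidefinite. -/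
open Matrix ComplexOrder

noncomputable section

/-!
Up to the factor `1 / (2γ)`, `T1` is an arrow matrix with positive diagonal block
`diag(γ, γ - 1, γ - 1)`. Such a matrix is a nonnegative combination of rank-one matrices `u uᵀ`
(hence positive semidefinite) as soon as its Schur complement `s - ∑ cᵢ² / dᵢ` is nonnegative.
Here the Schur complement is exactly zero: `βᵢ² = αᵢ (1 - αᵢ)` makes `∑ cᵢ² / dᵢ = 2 - γ`.
-/

theorem Matrix.PosSemidef.map_ofReal {n : Type*} [Finite n] {A : Matrix n n ℝ}
    (hA : A.PosSemidef) : (A.map Complex.ofReal).PosSemidef := by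
  obtain ⟨m, v, rfl⟩ := posSemidef_iff_eq_sum_vecMulVec.mp hA
  have : Fintype n := Fintype.ofFinite n
  have hmap : (∑ i, vecMulVec (v i) (star (v i))).map Complex.ofReal =
      ∑ i, vecMulVec (fun j ↦ (v i j : ℂ)) (star fun j ↦ (v i j : ℂ)) := by
    ext j k
    simp [Matrix.sum_apply, vecMulVec_apply]
  rw [hmap]
  exact posSemidef_sum _ fun i _ ↦ posSemidef_vecMulVec_self_star _

theorem Matrix.posSemidef_arrow_of_sum_sq_div_le {d₁ d₂ d₃ c₁ c₂ c₃ s : ℝ}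
    (hd₁ : 0 < d₁) (hd₂ : 0 < d₂) (hd₃ : 0 < d₃)
    (hs : c₁ ^ 2 / d₁ + c₂ ^ 2 / d₂ + c₃ ^ 2 / d₃ ≤ s) :
    (!![d₁, 0, 0, c₁; 0, d₂, 0, c₂; 0, 0, d₃, c₃; c₁, c₂, c₃, s]
      : Matrix (Fin 4) (Fin 4) ℝ).PosSemidef := by
  have hrankOne (u : Fin 4 → ℝ) : (vecMulVec u u).PosSemidef := by
    simpa using posSemidef_vecMulVec_self_star u
  have hdecomp : !![d₁, 0, 0, c₁; 0, d₂, 0, c₂; 0, 0, d₃, c₃; c₁, c₂, c₃, s] =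
      d₁ • vecMulVec ![1, 0, 0, c₁ / d₁] ![1, 0, 0, c₁ / d₁] +
      d₂ • vecMulVec ![0, 1, 0, c₂ / d₂] ![0, 1, 0, c₂ / d₂] +
      d₃ • vecMulVec ![0, 0, 1, c₃ / d₃] ![0, 0, 1, c₃ / d₃] +
      (s - (c₁ ^ 2 / d₁ + c₂ ^ 2 / d₂ + c₃ ^ 2 / d₃)) • vecMulVec ![0, 0, 0, 1] ![0, 0, 0, 1] := by
    ext i j
    fin_cases i <;> fin_cases j <;> simp <;> field_simp; ring
  rw [hdecomp]
  exact ((((hrankOne _).smul hd₁.le).add ((hrankOne _).smul hd₂.le)).add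
    ((hrankOne _).smul hd₃.le)).add ((hrankOne _).smul (sub_nonneg.mpr hs))

theorem T1_posSemidef_general (α1 α2 γ β1 β2 : ℝ)
    (hα1 : α1 ∈ Set.Ioc (0:ℝ) 1) (hα2 : α2 ∈ Set.Ioc (0:ℝ) 1)
    (hγ : γ = α1 + α2) (hγ1 : 1 < γ)
    (hβ1 : β1 = Real.sqrt (α1 * (1 - α1))) (hβ2 : β2 = Real.sqrt (α2 * (1 - α2))) :
    (((1 / (2 * γ)) •
      !![γ, 0, 0, -(β1 * β2 * γ / (α1 * α2));
         0, γ - 1, 0, -((γ - 1) * β1 / α1);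
         0, 0, γ - 1, -((γ - 1) * β2 / α2);
         -(β1 * β2 * γ / (α1 * α2)), -((γ - 1) * β1 / α1), -((γ - 1) * β2 / α2), 2 - γ]
      : Matrix (Fin 4) (Fin 4) ℝ).map Complex.ofReal).PosSemidef := by
  obtain ⟨hα1₀, hα1₁⟩ := hα1
  obtain ⟨hα2₀, hα2₁⟩ := hα2
  have hβ1_sq : β1 ^ 2 = α1 * (1 - α1) := hβ1 ▸ Real.sq_sqrt (by nlinarith)
  have hβ2_sq : β2 ^ 2 = α2 * (1 - α2) := hβ2 ▸ Real.sq_sqrt (by nlinarith)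
  have hschur : (-(β1 * β2 * γ / (α1 * α2))) ^ 2 / γ + (-((γ - 1) * β1 / α1)) ^ 2 / (γ - 1) +
      (-((γ - 1) * β2 / α2)) ^ 2 / (γ - 1) ≤ 2 - γ := by
    have hγ0 : γ - 1 ≠ 0 := by linarith
    refine le_of_eq ?_
    simp only [neg_sq, div_pow, mul_pow, hβ1_sq, hβ2_sq]
    field_simp
    subst hγ
    ring
  have hT1 := posSemidef_arrow_of_sum_sq_div_le (by linarith) (by linarith) (by linarith) hschur
  exact (hT1.smul (by positivity : (0 : ℝ) ≤ 1 / (2 * γ))).map_ofReal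

/-- The matrix `T1` from the sufficiency proof is positive semidefinite. -/
theorem T1_posSemidef (α1 α2 γ β1 β2 : ℝ)
    (hα1 : α1 ∈ Set.Ioc (0:ℝ) 1) (hα2 : α2 ∈ Set.Ioc (0:ℝ) 1)
    (hγ : γ = α1 + α2) (hγ1 : 1 < γ) (hγ2 : γ ≤ 2)
    (hβ1 : β1 = Real.sqrt (α1 * (1 - α1))) (hβ2 : β2 = Real.sqrt (α2 * (1 - α2))) :
    (((1 / (2 * γ)) •
      !![γ, 0, 0, -(β1 * β2 * γ / (α1 * α2));
         0, γ - 1, 0, -((γ - 1) * β1 / α1);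
         0, 0, γ - 1, -((γ - 1) * β2 / α2);
         -(β1 * β2 * γ / (α1 * α2)), -((γ - 1) * β1 / α1), -((γ - 1) * β2 / α2), 2 - γ]
      : Matrix (Fin 4) (Fin 4) ℝ).map Complex.ofReal).PosSemidef :=
  T1_posSemidef_general α1 α2 γ β1 β2 hα1 hα2 hγ hγ1 hβ1 hβ2
end
end

section
/- Let α1, α2 ∈ (0,1] with γ := α1 + α2 > 1 and βi := √(αi(1−αi)), let T1 = (1/(2γ))·[[γ, 0, 0, −β1β2γ/(α1α2)], [0, γ−1, 0, −(γ−1)β1/α1], [0, 0, γ−1, −(γ−1)β2/α2], [−β1β2γ/(α1α2), −(γ−1)β1/α1, −(γ−1)β2/α2, 2−γ]], and let ψ be the vector (√((1−α1)(1−α2)), √((1−α1)α2), √(α1(1−α2)), √(α1α2))ᵀ ∈ ℂ⁴. Then T1 ψ = 0; in particular, Tr(ρ2 T1) = 0 where ρ2 = [[1−α1, β1],[β1, α1]] ⊗ [[1−α2, β2],[β2, α2]]. -/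
open Matrix Kronecker ComplexOrder

noncomputable section

/-!
Write `u α = (√(1-α), √α)`. Then `ψ = u α1 ⊗ u α2` and each factor of `ρ2` is the rank-one
matrix `u α uᵀ`, so `ρ2 = ψ ψᵀ` and `Tr(ρ2 T1) = ψᵀ (T1 ψ)`; everything therefore reduces to
`T1 ψ = 0`. Putting `α1 = a²`, `α2 = c²`, all square roots become products of `a`, `c`,
`√(1-a²)`, `√(1-c²)`, and the four coordinates of `T1 ψ` vanish identically, the last one only
after using `√(1-a²)² = 1-a²` and `√(1-c²)² = 1-c²`.
-/

theorem kroneckerMap_vecMulVec {R l m n p : Type*} [CommSemiring R] (a : l → R) (b : m → R)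
    (c : n → R) (d : p → R) :
    vecMulVec a b ⊗ₖ vecMulVec c d =
      vecMulVec (fun i => a i.1 * c i.2) (fun j => b j.1 * d j.2) := by
  ext i j
  simp only [kroneckerMap_apply, vecMulVec_apply, mul_mul_mul_comm]

theorem trace_vecMulVec_mul {R n : Type*} [Fintype n] [CommSemiring R] (u w : n → R)
    (M : Matrix n n R) : trace (vecMulVec u w * M) = (M *ᵥ u) ⬝ᵥ w := by
  rw [trace_mul_comm, mul_vecMulVec, trace_vecMulVec]

def idx4Equiv : Fin 2 × Fin 2 ≃ Fin 4 := Equiv.ofBijective idx4 (by decide)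

theorem toPair_mulVec_comp (M : Matrix (Fin 4) (Fin 4) ℂ) (v : Fin 4 → ℂ) :
    toPair M *ᵥ (v ∘ idx4) = (M *ᵥ v) ∘ idx4 := by
  change M.submatrix idx4Equiv idx4Equiv *ᵥ (v ∘ idx4Equiv) = (M *ᵥ v) ∘ idx4Equiv
  rw [submatrix_mulVec_equiv, Function.comp_assoc, Equiv.self_comp_symm, Function.comp_id]

def T1Mat (α1 α2 : ℝ) : Matrix (Fin 4) (Fin 4) ℝ :=
  let γ := α1 + α2
  let β1 := √(α1 * (1 - α1))
  let β2 := √(α2 * (1 - α2))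
  (1 / (2 * γ)) •
    !![γ, 0, 0, -(β1 * β2 * γ / (α1 * α2));
       0, γ - 1, 0, -((γ - 1) * β1 / α1);
       0, 0, γ - 1, -((γ - 1) * β2 / α2);
       -(β1 * β2 * γ / (α1 * α2)), -((γ - 1) * β1 / α1), -((γ - 1) * β2 / α2), 2 - γ]

def psiVec (α1 α2 : ℝ) : Fin 4 → ℝ :=
  ![√((1 - α1) * (1 - α2)), √((1 - α1) * α2), √(α1 * (1 - α2)), √(α1 * α2)]

theorem T1Mat_mulVec_psiVec {α1 α2 : ℝ} (h1 : α1 ∈ Set.Ioc 0 1) (h2 : α2 ∈ Set.Ioc 0 1) :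
    T1Mat α1 α2 *ᵥ psiVec α1 α2 = 0 := by
  obtain ⟨a, ha, rfl⟩ : ∃ a, 0 < a ∧ a ^ 2 = α1 := ⟨√α1, Real.sqrt_pos.2 h1.1, Real.sq_sqrt h1.1.le⟩
  obtain ⟨c, hc, rfl⟩ : ∃ c, 0 < c ∧ c ^ 2 = α2 := ⟨√α2, Real.sqrt_pos.2 h2.1, Real.sq_sqrt h2.1.le⟩
  have ha' : 0 ≤ 1 - a ^ 2 := sub_nonneg.2 h1.2
  have hc' : 0 ≤ 1 - c ^ 2 := sub_nonneg.2 h2.2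
  have hb : (√(1 - a ^ 2)) ^ 2 = 1 - a ^ 2 := Real.sq_sqrt ha'
  have hd : (√(1 - c ^ 2)) ^ 2 = 1 - c ^ 2 := Real.sq_sqrt hc'
  ext i
  fin_cases i <;>
    simp only [T1Mat, psiVec, mulVec, dotProduct, Fin.sum_univ_four, smul_of, smul_cons,
      smul_empty, smul_eq_mul, of_apply, cons_val', cons_val_fin_one, cons_val, cons_val_zero,
      cons_val_one, Fin.zero_eta, Fin.mk_one, Fin.reduceFinMk, Fin.isValue, Pi.zero_apply,
      Real.sqrt_mul (sq_nonneg _), Real.sqrt_mul ha', Real.sqrt_sq ha.le, Real.sqrt_sq hc.le, mul_zero, zero_mul, add_zero, zero_add] <;>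
    field_simp
  · ring
  · ring
  · ring
  · rw [hb, hd]
    ring

def amp (α : ℝ) : Fin 2 → ℝ := ![√(1 - α), √α]

theorem vecMulVec_amp {α : ℝ} (h0 : 0 ≤ α) (h1 : α ≤ 1) :
    vecMulVec (fun i => (amp α i : ℂ)) (fun i => (amp α i : ℂ)) =
      !![((1 - α : ℝ) : ℂ), (√(α * (1 - α)) : ℝ); (√(α * (1 - α)) : ℝ), (α : ℝ)] := by
  have h1' : 0 ≤ 1 - α := sub_nonneg.2 h1
  ext i j
  fin_cases i <;> fin_cases j <;>
    simp [amp, vecMulVec_apply, Real.sqrt_mul h0, ← Complex.ofReal_mul, Real.mul_self_sqrt h0,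
      Real.mul_self_sqrt h1', mul_comm]

theorem psiVec_comp_idx4 {α1 : ℝ} (h0 : 0 ≤ α1) (h1 : α1 ≤ 1) (α2 : ℝ) :
    psiVec α1 α2 ∘ idx4 = fun p => amp α1 p.1 * amp α2 p.2 := by
  have h1' : 0 ≤ 1 - α1 := sub_nonneg.2 h1
  ext ⟨i, j⟩
  fin_cases i <;> fin_cases j <;>
    simp [psiVec, amp, idx4, Real.sqrt_mul h0, Real.sqrt_mul h1']

theorem T1_kernel_general (α1 α2 γ β1 β2 : ℝ)
    (hα1 : α1 ∈ Set.Ioc (0:ℝ) 1) (hα2 : α2 ∈ Set.Ioc (0:ℝ) 1)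
    (hγ : γ = α1 + α2)
    (hβ1 : β1 = Real.sqrt (α1 * (1 - α1))) (hβ2 : β2 = Real.sqrt (α2 * (1 - α2)))
    (T1 : Matrix (Fin 4) (Fin 4) ℂ)
    (hT1 : T1 = ((1 / (2 * γ)) •
      !![γ, 0, 0, -(β1 * β2 * γ / (α1 * α2));
         0, γ - 1, 0, -((γ - 1) * β1 / α1);
         0, 0, γ - 1, -((γ - 1) * β2 / α2);
         -(β1 * β2 * γ / (α1 * α2)), -((γ - 1) * β1 / α1), -((γ - 1) * β2 / α2), 2 - γ]
      : Matrix (Fin 4) (Fin 4) ℝ).map Complex.ofReal)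
    (ψ : Fin 4 → ℂ)
    (hψ : ψ = fun i => ((![Real.sqrt ((1 - α1) * (1 - α2)), Real.sqrt ((1 - α1) * α2),
      Real.sqrt (α1 * (1 - α2)), Real.sqrt (α1 * α2)] i : ℝ) : ℂ))
    (ρ2 : Mat 2 2)
    (hρ2 : ρ2 = (!![((1 - α1 : ℝ) : ℂ), (β1 : ℝ); (β1 : ℝ), (α1 : ℝ)]) ⊗ₖ
      (!![((1 - α2 : ℝ) : ℂ), (β2 : ℝ); (β2 : ℝ), (α2 : ℝ)])) :
    T1 *ᵥ ψ = 0 ∧ (ρ2 * toPair T1).trace = 0 := by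
  subst hγ hβ1 hβ2
  replace hT1 : T1 = (T1Mat α1 α2).map Complex.ofReal := hT1
  replace hψ : ψ = fun i => (psiVec α1 α2 i : ℂ) := hψ
  have hker : T1 *ᵥ ψ = 0 := by
    ext i
    have h := (RingHom.map_mulVec Complex.ofRealHom (T1Mat α1 α2) (psiVec α1 α2) i).symm
    rw [T1Mat_mulVec_psiVec hα1 hα2] at h
    rw [hT1, hψ]
    exact h.trans (map_zero _)
  have hρ : ρ2 = vecMulVec (ψ ∘ idx4) (ψ ∘ idx4) := by
    have hprod : ψ ∘ idx4 = fun p => (amp α1 p.1 : ℂ) * amp α2 p.2 := by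
      ext p
      simp only [hψ, Function.comp_apply, ← Complex.ofReal_mul]
      exact congrArg _ (congrFun (psiVec_comp_idx4 hα1.1.le hα1.2 α2) p)
    rw [hρ2, ← vecMulVec_amp hα1.1.le hα1.2, ← vecMulVec_amp hα2.1.le hα2.2,
      kroneckerMap_vecMulVec, hprod]
  refine ⟨hker, ?_⟩
  rw [hρ, trace_vecMulVec_mul, toPair_mulVec_comp, hker]
  simp

/-- `T1 ψ = 0`, and in particular `Tr(ρ2 T1) = 0`. -/
theorem T1_kernel (α1 α2 γ β1 β2 : ℝ)
    (hα1 : α1 ∈ Set.Ioc (0:ℝ) 1) (hα2 : α2 ∈ Set.Ioc (0:ℝ) 1)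
    (hγ : γ = α1 + α2) (hγ1 : 1 < γ)
    (hβ1 : β1 = Real.sqrt (α1 * (1 - α1))) (hβ2 : β2 = Real.sqrt (α2 * (1 - α2)))
    (T1 : Matrix (Fin 4) (Fin 4) ℂ)
    (hT1 : T1 = ((1 / (2 * γ)) •
      !![γ, 0, 0, -(β1 * β2 * γ / (α1 * α2));
         0, γ - 1, 0, -((γ - 1) * β1 / α1);
         0, 0, γ - 1, -((γ - 1) * β2 / α2);
         -(β1 * β2 * γ / (α1 * α2)), -((γ - 1) * β1 / α1), -((γ - 1) * β2 / α2), 2 - γ]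
      : Matrix (Fin 4) (Fin 4) ℝ).map Complex.ofReal)
    (ψ : Fin 4 → ℂ)
    (hψ : ψ = fun i => ((![Real.sqrt ((1 - α1) * (1 - α2)), Real.sqrt ((1 - α1) * α2),
      Real.sqrt (α1 * (1 - α2)), Real.sqrt (α1 * α2)] i : ℝ) : ℂ))
    (ρ2 : Mat 2 2)
    (hρ2 : ρ2 = (!![((1 - α1 : ℝ) : ℂ), (β1 : ℝ); (β1 : ℝ), (α1 : ℝ)]) ⊗ₖ
      (!![((1 - α2 : ℝ) : ℂ), (β2 : ℝ); (β2 : ℝ), (α2 : ℝ)])) :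
    T1 *ᵥ ψ = 0 ∧ (ρ2 * toPair T1).trace = 0 :=
  T1_kernel_general α1 α2 γ β1 β2 hα1 hα2 hγ hβ1 hβ2 T1 hT1 ψ hψ ρ2 hρ2
end
end

section
/- Let T be a Hermitian 4×4 matrix (indexed by Fin 2 × Fin 2 in the order (0,0),(0,1),(1,0),(1,1)) satisfying T + Γ(T) = 1 (identity). Then there exist real numbers x1, x2 and a complex number z such that T = [[1/2, −i·x1, 0, −z], [i·x1, 1/2, z, 0], [0, conj(z), 1/2, −i·x2], [−conj(z), 0, i·x2, 1/2]]. -/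
open Matrix ComplexOrder

noncomputable section

lemma purely_imag {a : ℂ} (h : a + (starRingEnd ℂ) a = 0) :
    a = Complex.I * (a.im : ℝ) := by
  have hre : a.re = 0 := by
    have := congrArg Complex.re h
    simp [Complex.add_re, Complex.conj_re] at this
    linarith
  rw [← Complex.re_add_im a, hre]
  simp [mul_comm]

/-- Any Hermitian `T` with `T + Γ(T) = 1` has the stated form. -/
theorem hermitian_pt_identity_form (T : Mat 2 2) (hT : T.IsHermitian)
    (h : T + ptB T = 1) :
    ∃ (x1 x2 : ℝ) (z : ℂ), T = toPair
      !![(1/2 : ℂ), -(Complex.I * (x1 : ℝ)), 0, -z;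
         Complex.I * (x1 : ℝ), 1/2, z, 0;
         0, (starRingEnd ℂ) z, 1/2, -(Complex.I * (x2 : ℝ));
         -((starRingEnd ℂ) z), 0, Complex.I * (x2 : ℝ), 1/2] := by
  have keyo : ∀ a b c d : Fin 2, ((a,b) : Fin 2 × Fin 2) ≠ (c,d) →
      T (a,b) (c,d) + T (a,d) (c,b) = 0 := by
    intro a b c d hne
    have := congrFun (congrFun h (a,b)) (c,d)
    rw [Matrix.add_apply, Matrix.one_apply, if_neg hne] at this
    simpa [ptB] using this
  have keyd : ∀ a b : Fin 2, T (a,b) (a,b) + T (a,b) (a,b) = 1 := by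
    intro a b
    have := congrFun (congrFun h (a,b)) (a,b)
    simpa [ptB, Matrix.add_apply, Matrix.one_apply] using this
  have herm : ∀ p q : Fin 2 × Fin 2, T p q = (starRingEnd ℂ) (T q p) := by
    intro p q
    have := congrFun (congrFun hT p) q
    simp only [Matrix.conjTranspose_apply] at this
    rw [← this]
    simp
  have hc1 : (starRingEnd ℂ) (T (0,0) (0,1)) = -(T (0,0) (0,1)) := by
    have := keyo 0 0 0 1 (by decide)
    rw [herm (0,1) (0,0)] at this
    linear_combination this
  have hc2 : (starRingEnd ℂ) (T (1,0) (1,1)) = -(T (1,0) (1,1)) := by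
    have := keyo 1 0 1 1 (by decide)
    rw [herm (1,1) (1,0)] at this
    linear_combination this
  refine ⟨-(T (0,0) (0,1)).im, -(T (1,0) (1,1)).im, T (0,1) (1,0), ?_⟩
  have h1 : T (0,0) (0,1) = Complex.I * ((T (0,0) (0,1)).im : ℝ) := by
    apply purely_imag
    have := keyo 0 0 0 1 (by decide)
    rw [herm (0,1) (0,0)] at this
    simpa using this
  have h2 : T (1,0) (1,1) = Complex.I * ((T (1,0) (1,1)).im : ℝ) := by
    apply purely_imag
    have := keyo 1 0 1 1 (by decide)
    rw [herm (1,1) (1,0)] at this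
    simpa using this
  ext p q
  fin_cases p <;> fin_cases q
  · show T (0,0) (0,0) = 1/2
    linear_combination (keyd 0 0) / 2
  · show T (0,0) (0,1) = -(Complex.I * ((-(T (0,0) (0,1)).im : ℝ) : ℂ))
    push_cast; linear_combination h1
  · show T (0,0) (1,0) = 0
    linear_combination (keyo 0 0 1 0 (by decide)) / 2
  · show T (0,0) (1,1) = -(T (0,1) (1,0))
    linear_combination keyo 0 0 1 1 (by decide)
  · show T (0,1) (0,0) = Complex.I * ((-(T (0,0) (0,1)).im : ℝ) : ℂ)
    rw [herm (0,1) (0,0), hc1]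
    push_cast; linear_combination -h1
  · show T (0,1) (0,1) = 1/2
    linear_combination (keyd 0 1) / 2
  · show T (0,1) (1,0) = T (0,1) (1,0)
    rfl
  · show T (0,1) (1,1) = 0
    linear_combination (keyo 0 1 1 1 (by decide)) / 2
  · show T (1,0) (0,0) = 0
    linear_combination (keyo 1 0 0 0 (by decide)) / 2
  · show T (1,0) (0,1) = (starRingEnd ℂ) (T (0,1) (1,0))
    exact herm (1,0) (0,1)
  · show T (1,0) (1,0) = 1/2
    linear_combination (keyd 1 0) / 2
  · show T (1,0) (1,1) = -(Complex.I * ((-(T (1,0) (1,1)).im : ℝ) : ℂ))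
    push_cast; linear_combination h2
  · show T (1,1) (0,0) = -((starRingEnd ℂ) (T (0,1) (1,0)))
    have := keyo 1 1 0 0 (by decide)
    rw [herm (1,0) (0,1)] at this
    linear_combination this
  · show T (1,1) (0,1) = 0
    linear_combination (keyo 1 1 0 1 (by decide)) / 2
  · show T (1,1) (1,0) = Complex.I * ((-(T (1,0) (1,1)).im : ℝ) : ℂ)
    rw [herm (1,1) (1,0), hc2]
    push_cast; linear_combination -h2
  · show T (1,1) (1,1) = 1/2
    linear_combination (keyd 1 1) / 2
end
end
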